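/- arXiv:1711.02504 — 6 statements merged into one kernel-verified Lean document; each statement's English description precedes it below -/
import Mathlib

section
/- Let p ≥ 1 be an integer, let θ and θ₀ be unit vectors in ℝ^p, and set M := θθ' − θ₀θ₀' (a p×p matrix, where vv' denotes the outer product of a column vector v with itself). Then for all real numbers a, b, c, d one has tr[ M (a θθ' + b (I_p − θθ')) M (c θθ' + d (I_p − θθ')) ] = (ad + bc)(1 − (θ₀'θ)²) + (a − b)(c − d)(1 − (θ₀'θ)²)², where θ₀'θ denotes the Euclidean inner product, I_p the p×p identity matrix, and tr the trace. -/
open Matrix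

lemma vmv_mul {p : ℕ} (u v x y : Fin p → ℝ) :
    vecMulVec u v * vecMulVec x y = (v ⬝ᵥ x) • vecMulVec u y := by
  ext i j
  simp only [Matrix.mul_apply, vecMulVec_apply, Matrix.smul_apply, smul_eq_mul,
    dotProduct, Finset.sum_mul]
  exact Finset.sum_congr rfl fun k _ => by ring

lemma trace_vmv {p : ℕ} (u v : Fin p → ℝ) :
    Matrix.trace (vecMulVec u v) = u ⬝ᵥ v := by
  simp [Matrix.trace, Matrix.diag, vecMulVec_apply, dotProduct]

theorem trace_M_A_M_B (p : ℕ) (hp : 1 ≤ p) (θ θ₀ : Fin p → ℝ)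
    (hθ : θ ⬝ᵥ θ = 1) (hθ₀ : θ₀ ⬝ᵥ θ₀ = 1) (a b c d : ℝ) :
    Matrix.trace
      ((vecMulVec θ θ - vecMulVec θ₀ θ₀) *
        (a • vecMulVec θ θ + b • ((1 : Matrix (Fin p) (Fin p) ℝ) - vecMulVec θ θ)) *
        (vecMulVec θ θ - vecMulVec θ₀ θ₀) *
        (c • vecMulVec θ θ + d • ((1 : Matrix (Fin p) (Fin p) ℝ) - vecMulVec θ θ))) =
      (a * d + b * c) * (1 - (θ₀ ⬝ᵥ θ) ^ 2) +
        (a - b) * (c - d) * (1 - (θ₀ ⬝ᵥ θ) ^ 2) ^ 2 := by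
  have hcomm : θ ⬝ᵥ θ₀ = θ₀ ⬝ᵥ θ := dotProduct_comm _ _
  simp only [Matrix.sub_mul, Matrix.mul_sub, Matrix.mul_add, Matrix.add_mul,
    Matrix.smul_mul, Matrix.mul_smul, Matrix.mul_one, Matrix.one_mul,
    vmv_mul, smul_smul, smul_sub, smul_add,
    Matrix.trace_add, Matrix.trace_sub, Matrix.trace_smul, trace_vmv,
    smul_eq_mul, hcomm, hθ, hθ₀]
  ring
end

section
/- There exists a constant C > 0 such that for every integer p ≥ 2 and every real κ > 0, 0 ≤ f₄(p,κ) − f₂(p,κ)² ≤ C f₂(p,κ)²/p. -/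
/-!
Put `β = (p - 3) / 2`, `w(u) = (1 - u²)^β`, and let `A, B, C` be the integrals of
`(1 - u²)^j w(u) e^(κu)` over `[-1, 1]` for `j = 0, 1, 2`, so that `f₂ = B / A`, `f₄ = C / A`
and the claim reads `0 ≤ AC - B² ≤ 4B² / p`. The lower bound is Cauchy–Schwarz. For the upper
bound, integration by parts (Stein's identity) gives `κB = (p - 1) m₁` and
`κC = (p + 1) (m₁ - m₃)`, where `m_k` are the moments of `w(u) e^(κu)`; hence
`(p - 1) AC ≤ (p + 1) B²` reduces to `m₁ m₂ ≤ m₀ m₃`, i.e. to `Cov(U, U²) ≥ 0` for `κ ≥ 0`.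
This holds because `2 (m₀ m₃ - m₁ m₂)` is the double integral of
`(u - v)² (u + v) w(u) w(v) e^(κ(u + v))`, and averaging it with its image under
`(u, v) ↦ (-u, -v)` produces the nonnegative factor `(u + v) (e^(κ(u + v)) - e^(-κ(u + v)))`.
Finally `(p - 1) AC ≤ (p + 1) B²` gives `AC - B² ≤ 2B² / (p - 1) ≤ 4B² / p`.
-/

open MeasureTheory intervalIntegral

/-- `mInt p κ ℓ = ∫_{-1}^1 u^ℓ (1-u²)^{(p-3)/2} exp(κ u) du`. -/
noncomputable def mInt (p : ℕ) (κ : ℝ) (ℓ : ℕ) : ℝ :=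
  ∫ u in (-1 : ℝ)..1, u ^ ℓ * (1 - u ^ 2) ^ (((p : ℝ) - 3) / 2) * Real.exp (κ * u)

/-- `e₂(p,κ) = E[U²]` under `FvML_p(θ,κ)`. -/
noncomputable def e2 (p : ℕ) (κ : ℝ) : ℝ := mInt p κ 2 / mInt p κ 0

/-- `f₂(p,κ) = E[1-U²]` under `FvML_p(θ,κ)`. -/
noncomputable def f2 (p : ℕ) (κ : ℝ) : ℝ := 1 - e2 p κ

/-- `f₄(p,κ) = E[(1-U²)²]` under `FvML_p(θ,κ)`. -/
noncomputable def f4 (p : ℕ) (κ : ℝ) : ℝ :=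
  (∫ u in (-1 : ℝ)..1, (1 - u ^ 2) ^ (((p : ℝ) + 1) / 2) * Real.exp (κ * u)) / mInt p κ 0

open Set

noncomputable def tiltedMoment (w : ℝ → ℝ) (κ : ℝ) (k : ℕ) : ℝ :=
  ∫ u in (-1 : ℝ)..1, u ^ k * w u * Real.exp (κ * u)

section TiltedMoment

variable {w : ℝ → ℝ}

theorem IntervalIntegrable.continuous_mul_mul_exp {a b : ℝ} (hw : IntervalIntegrable w volume a b)
    {g : ℝ → ℝ} (hg : Continuous g) (κ : ℝ) :
    IntervalIntegrable (fun u => g u * w u * Real.exp (κ * u)) volume a b :=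
  (hw.continuousOn_mul hg.continuousOn).mul_continuousOn (by fun_prop)

theorem integral_cubic_mul_mul_exp (hw : IntervalIntegrable w volume (-1) 1) (κ c₀ c₁ c₂ c₃ : ℝ) :
    ∫ u in (-1 : ℝ)..1, (c₀ + c₁ * u + c₂ * u ^ 2 + c₃ * u ^ 3) * w u * Real.exp (κ * u) =
      c₀ * tiltedMoment w κ 0 + c₁ * tiltedMoment w κ 1 + c₂ * tiltedMoment w κ 2 +
        c₃ * tiltedMoment w κ 3 := by
  have hi : ∀ (k : ℕ) (c : ℝ), IntervalIntegrable (fun u => c * (u ^ k * w u * Real.exp (κ * u)))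
      volume (-1) 1 := fun k c => (hw.continuous_mul_mul_exp (continuous_pow k) κ).const_mul c
  have hsplit : (fun u => (c₀ + c₁ * u + c₂ * u ^ 2 + c₃ * u ^ 3) * w u * Real.exp (κ * u)) =
      fun u => c₀ * (u ^ 0 * w u * Real.exp (κ * u)) + c₁ * (u ^ 1 * w u * Real.exp (κ * u)) +
        c₂ * (u ^ 2 * w u * Real.exp (κ * u)) + c₃ * (u ^ 3 * w u * Real.exp (κ * u)) := by
    ext u; ring
  rw [hsplit, integral_add (((hi 0 c₀).add (hi 1 c₁)).add (hi 2 c₂)) (hi 3 c₃),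
    integral_add ((hi 0 c₀).add (hi 1 c₁)) (hi 2 c₂), integral_add (hi 0 c₀) (hi 1 c₁)]
  simp only [intervalIntegral.integral_const_mul, tiltedMoment]

theorem tiltedMoment_neg (hw : ∀ u, w (-u) = w u) (κ : ℝ) (k : ℕ) :
    tiltedMoment w (-κ) k = (-1) ^ k * tiltedMoment w κ k := by
  have h := integral_comp_neg (a := -1) (b := 1) fun u => u ^ k * w u * Real.exp (κ * u)
  rw [neg_neg] at h
  rw [tiltedMoment, tiltedMoment, ← h, ← intervalIntegral.integral_const_mul]
  refine integral_congr fun u _ => ?_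
  rw [hw, neg_pow u, mul_neg, neg_mul, ← mul_assoc, ← mul_assoc, ← mul_assoc, ← mul_pow]
  norm_num

theorem integral_sq_sub_mul_add_mul_mul_exp (hw : IntervalIntegrable w volume (-1) 1) (κ u : ℝ) :
    ∫ v in (-1 : ℝ)..1, (u - v) ^ 2 * (u + v) * w v * Real.exp (κ * v) =
      tiltedMoment w κ 3 + -tiltedMoment w κ 2 * u + -tiltedMoment w κ 1 * u ^ 2 +
        tiltedMoment w κ 0 * u ^ 3 := by
  have h := integral_cubic_mul_mul_exp hw κ (u ^ 3) (-u ^ 2) (-u) 1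
  simp only [show ∀ v : ℝ, (u - v) ^ 2 * (u + v) = u ^ 3 + -u ^ 2 * v + -u * v ^ 2 + 1 * v ^ 3
    from fun v => by ring, h]
  ring

theorem tiltedMoment_one_mul_two_le (hw : IntervalIntegrable w volume (-1) 1)
    (hw_nonneg : ∀ u ∈ Icc (-1 : ℝ) 1, 0 ≤ w u) (hw_even : ∀ u, w (-u) = w u) {κ : ℝ}
    (hκ : 0 ≤ κ) :
    tiltedMoment w κ 1 * tiltedMoment w κ 2 ≤ tiltedMoment w κ 0 * tiltedMoment w κ 3 := by
  set M := tiltedMoment w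
  set P := fun c u : ℝ => M c 3 + -M c 2 * u + -M c 1 * u ^ 2 + M c 0 * u ^ 3
  set Φ := fun u v : ℝ => (u - v) ^ 2 * (u + v) *
    (w u * Real.exp (κ * u) * (w v * Real.exp (κ * v)) -
      w u * Real.exp (-κ * u) * (w v * Real.exp (-κ * v)))
  have hinner : ∀ u, ∫ v in (-1 : ℝ)..1, Φ u v =
      P κ u * w u * Real.exp (κ * u) - P (-κ) u * w u * Real.exp (-κ * u) := by
    intro u
    have hΦ : Φ u = fun v =>
        (u - v) ^ 2 * (u + v) * w v * Real.exp (κ * v) * (w u * Real.exp (κ * u)) -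
          (u - v) ^ 2 * (u + v) * w v * Real.exp (-κ * v) * (w u * Real.exp (-κ * u)) := by
      ext v; ring
    rw [hΦ, integral_sub ((hw.continuous_mul_mul_exp (by fun_prop) κ).mul_const _)
        ((hw.continuous_mul_mul_exp (by fun_prop) (-κ)).mul_const _),
      intervalIntegral.integral_mul_const, intervalIntegral.integral_mul_const,
      integral_sq_sub_mul_add_mul_mul_exp hw, integral_sq_sub_mul_add_mul_mul_exp hw]
    ring
  have houter : ∫ u in (-1 : ℝ)..1, (P κ u * w u * Real.exp (κ * u) -
      P (-κ) u * w u * Real.exp (-κ * u)) = 4 * (M κ 0 * M κ 3 - M κ 1 * M κ 2) := by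
    rw [integral_sub (hw.continuous_mul_mul_exp (by fun_prop) κ)
        (hw.continuous_mul_mul_exp (by fun_prop) (-κ)),
      integral_cubic_mul_mul_exp hw, integral_cubic_mul_mul_exp hw]
    simp only [M, tiltedMoment_neg hw_even]
    ring
  have hΦ_nonneg : ∀ u ∈ Icc (-1 : ℝ) 1, ∀ v ∈ Icc (-1 : ℝ) 1, 0 ≤ Φ u v := by
    intro u hu v hv
    have hsinh : 0 ≤ (u + v) * (Real.exp (κ * (u + v)) - Real.exp (-(κ * (u + v)))) := by
      rcases le_total 0 (u + v) with h | h
      · exact mul_nonneg h (sub_nonneg.2 (Real.exp_le_exp.2 (by nlinarith)))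
      · exact mul_nonneg_of_nonpos_of_nonpos h (sub_nonpos.2 (Real.exp_le_exp.2 (by nlinarith)))
    have hΦ : Φ u v = (u - v) ^ 2 * (w u * w v) *
        ((u + v) * (Real.exp (κ * (u + v)) - Real.exp (-(κ * (u + v))))) := by
      simp only [Φ, mul_add, neg_add, Real.exp_add, neg_mul]
      ring
    rw [hΦ]
    have := hw_nonneg u hu
    have := hw_nonneg v hv
    positivity
  have := integral_nonneg (μ := volume) (a := -1) (b := 1) (by norm_num) fun u hu =>
    (hinner u) ▸ integral_nonneg (by norm_num) (hΦ_nonneg u hu)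
  linarith

theorem tiltedMoment_add_sq_le_mul (hw : IntervalIntegrable w volume (-1) 1)
    (hw_nonneg : ∀ u ∈ Icc (-1 : ℝ) 1, 0 ≤ w u) (κ : ℝ) (j k : ℕ) :
    tiltedMoment w κ (j + k) ^ 2 ≤ tiltedMoment w κ (2 * j) * tiltedMoment w κ (2 * k) := by
  have hi : ∀ (n : ℕ) (c : ℝ), IntervalIntegrable (fun u => c * (u ^ n * w u * Real.exp (κ * u)))
      volume (-1) 1 := fun n c => (hw.continuous_mul_mul_exp (continuous_pow n) κ).const_mul c
  have hquad : ∀ t : ℝ, 0 ≤ tiltedMoment w κ (2 * j) * (t * t) +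
      2 * tiltedMoment w κ (j + k) * t + tiltedMoment w κ (2 * k) := by
    intro t
    have hsq : (fun u => (t * u ^ j + u ^ k) ^ 2 * w u * Real.exp (κ * u)) =
        fun u => (t * t) * (u ^ (2 * j) * w u * Real.exp (κ * u)) +
          (2 * t) * (u ^ (j + k) * w u * Real.exp (κ * u)) +
            1 * (u ^ (2 * k) * w u * Real.exp (κ * u)) := by
      ext u; ring
    have h := integral_nonneg (μ := volume) (a := -1) (b := 1) (f := fun u =>
      (t * u ^ j + u ^ k) ^ 2 * w u * Real.exp (κ * u)) (by norm_num)
      fun u hu => mul_nonneg (mul_nonneg (sq_nonneg _) (hw_nonneg u hu)) (Real.exp_pos _).le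
    rw [hsq, integral_add ((hi _ _).add (hi _ _)) (hi _ _), integral_add (hi _ _) (hi _ _)] at h
    simp only [intervalIntegral.integral_const_mul] at h
    simp only [tiltedMoment]
    linarith
  have := discrim_le_zero hquad
  rw [discrim] at this
  linarith

end TiltedMoment

theorem intervalIntegrable_one_sub_sq_rpow {β : ℝ} (hβ : -(1 / 2) ≤ β) :
    IntervalIntegrable (fun u : ℝ => (1 - u ^ 2) ^ β) volume (-1) 1 := by
  have hsqrt : IntegrableOn (fun u : ℝ => 1 / √(1 - u ^ 2)) (Ioc (-1) 1) :=
    integrableOn_deriv_of_nonneg Real.continuous_arcsin.continuousOn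
      (fun u hu => Real.hasDerivAt_arcsin (by linarith [hu.1]) hu.2.ne) fun u _ => by positivity
  rw [intervalIntegrable_iff_integrableOn_Ioo_of_le (by norm_num)]
  refine (hsqrt.mono_set Ioo_subset_Ioc_self).mono'
    (by fun_prop : Measurable fun u : ℝ => (1 - u ^ 2) ^ β).aestronglyMeasurable ?_
  filter_upwards [ae_restrict_mem measurableSet_Ioo] with u hu
  have hpos : 0 < 1 - u ^ 2 := by nlinarith [hu.1, hu.2]
  calc ‖(1 - u ^ 2) ^ β‖ = (1 - u ^ 2) ^ β := Real.norm_of_nonneg (by positivity)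
    _ ≤ (1 - u ^ 2) ^ (-(1 / 2) : ℝ) := Real.rpow_le_rpow_of_exponent_ge hpos (by nlinarith) hβ
    _ = 1 / √(1 - u ^ 2) := by rw [Real.rpow_neg hpos.le, ← Real.sqrt_eq_rpow, inv_eq_one_div]

theorem tiltedMoment_one_sub_sq_rpow_add_one {β : ℝ} (hβ : -(1 / 2) ≤ β) (κ : ℝ) (k : ℕ) :
    tiltedMoment (fun u => (1 - u ^ 2) ^ (β + 1)) κ k =
      tiltedMoment (fun u => (1 - u ^ 2) ^ β) κ k -
        tiltedMoment (fun u => (1 - u ^ 2) ^ β) κ (k + 2) := by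
  have hw := intervalIntegrable_one_sub_sq_rpow hβ
  rw [tiltedMoment, tiltedMoment, tiltedMoment, ← integral_sub
    (hw.continuous_mul_mul_exp (continuous_pow _) κ)
    (hw.continuous_mul_mul_exp (continuous_pow _) κ)]
  refine integral_congr fun u hu => ?_
  rw [uIcc_of_le (by norm_num)] at hu
  simp only [Real.rpow_add_one' (by nlinarith [hu.1, hu.2] : (0 : ℝ) ≤ 1 - u ^ 2) (by linarith)]
  ring

theorem tiltedMoment_one_sub_sq_rpow_zero_pos {β : ℝ} (hβ : -(1 / 2) ≤ β) (κ : ℝ) :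
    0 < tiltedMoment (fun u => (1 - u ^ 2) ^ β) κ 0 :=
  intervalIntegral_pos_of_pos_on
    ((intervalIntegrable_one_sub_sq_rpow hβ).continuous_mul_mul_exp (continuous_pow 0) κ)
    (fun u hu => by
      have : 0 < 1 - u ^ 2 := by nlinarith [hu.1, hu.2]
      positivity)
    (by norm_num)

/-- Stein's identity: integrate `d/du ((1 - u²)^γ e^(κu))` over `[-1, 1]`; the boundary terms
vanish because `γ > 0`. -/
theorem mul_tiltedMoment_one_sub_sq_rpow {γ : ℝ} (hγ : 1 / 2 ≤ γ) (κ : ℝ) :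
    κ * tiltedMoment (fun u => (1 - u ^ 2) ^ γ) κ 0 =
      2 * γ * tiltedMoment (fun u => (1 - u ^ 2) ^ (γ - 1)) κ 1 := by
  set F := fun u : ℝ => (1 - u ^ 2) ^ γ * Real.exp (κ * u)
  set F' := fun u : ℝ => κ * (u ^ 0 * (1 - u ^ 2) ^ γ * Real.exp (κ * u)) -
    2 * γ * (u ^ 1 * (1 - u ^ 2) ^ (γ - 1) * Real.exp (κ * u))
  have hF : ContinuousOn F (Icc (-1) 1) := by
    have : 0 ≤ γ := by linarith
    fun_prop (disch := assumption)
  have hF' : ∀ u ∈ Ioo (-1 : ℝ) 1, HasDerivAt F (F' u) u := by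
    intro u hu
    have hpos : 1 - u ^ 2 ≠ 0 := by nlinarith [hu.1, hu.2]
    refine ((((hasDerivAt_pow 2 u).const_sub 1).rpow_const (p := γ) (Or.inl hpos)).mul
      ((hasDerivAt_id u).const_mul κ).exp).congr_deriv ?_
    simp only [F', id, Nat.cast_ofNat]
    ring
  have hw₀ := intervalIntegrable_one_sub_sq_rpow (β := γ) (by linarith)
  have hw₁ := intervalIntegrable_one_sub_sq_rpow (β := γ - 1) (by linarith)
  have h₀ := (hw₀.continuous_mul_mul_exp (continuous_pow 0) κ).const_mul κ
  have h₁ := (hw₁.continuous_mul_mul_exp (continuous_pow 1) κ).const_mul (2 * γ)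
  have hftc := integral_eq_sub_of_hasDerivAt_of_le (by norm_num) hF hF' (h₀.sub h₁)
  have hF_ends : F 1 - F (-1) = 0 := by
    simp [F, Real.zero_rpow (by linarith : γ ≠ 0)]
  rw [hF_ends, integral_sub h₀ h₁, intervalIntegral.integral_const_mul,
    intervalIntegral.integral_const_mul] at hftc
  rw [tiltedMoment, tiltedMoment]
  linarith

theorem tiltedMoment_one_sub_sq_rpow_sq_le {β : ℝ} (hβ : -(1 / 2) ≤ β) (κ : ℝ) :
    tiltedMoment (fun u => (1 - u ^ 2) ^ (β + 1)) κ 0 ^ 2 ≤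
      tiltedMoment (fun u => (1 - u ^ 2) ^ β) κ 0 *
        tiltedMoment (fun u => (1 - u ^ 2) ^ (β + 2)) κ 0 := by
  have hcs := tiltedMoment_add_sq_le_mul (intervalIntegrable_one_sub_sq_rpow hβ)
    (fun u hu => Real.rpow_nonneg (by nlinarith [hu.1, hu.2]) β) κ 0 2
  rw [show β + 2 = β + 1 + 1 by ring,
    tiltedMoment_one_sub_sq_rpow_add_one (β := β + 1) (by linarith),
    tiltedMoment_one_sub_sq_rpow_add_one hβ, tiltedMoment_one_sub_sq_rpow_add_one hβ]
  simp only [Nat.reduceAdd, Nat.reduceMul] at hcs ⊢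
  linear_combination hcs

theorem mul_tiltedMoment_one_sub_sq_rpow_le {β : ℝ} (hβ : -(1 / 2) ≤ β) {κ : ℝ} (hκ : 0 < κ) :
    (β + 1) * (tiltedMoment (fun u => (1 - u ^ 2) ^ (β + 2)) κ 0 *
      tiltedMoment (fun u => (1 - u ^ 2) ^ β) κ 0) ≤
        (β + 2) * tiltedMoment (fun u => (1 - u ^ 2) ^ (β + 1)) κ 0 ^ 2 := by
  have hB := mul_tiltedMoment_one_sub_sq_rpow (γ := β + 1) (by linarith) κ
  have hC := mul_tiltedMoment_one_sub_sq_rpow (γ := β + 2) (by linarith) κ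
  have hcov := tiltedMoment_one_mul_two_le (intervalIntegrable_one_sub_sq_rpow hβ)
    (fun u hu => Real.rpow_nonneg (by nlinarith [hu.1, hu.2]) β) (fun u => by rw [neg_sq]) hκ.le
  rw [show β + 2 - 1 = β + 1 by ring, tiltedMoment_one_sub_sq_rpow_add_one hβ] at hC
  rw [add_sub_cancel_right] at hB
  rw [tiltedMoment_one_sub_sq_rpow_add_one hβ] at hB ⊢
  simp only [Nat.reduceAdd] at hB hC ⊢
  set M := tiltedMoment (fun u => (1 - u ^ 2) ^ β) κ
  set C := tiltedMoment (fun u => (1 - u ^ 2) ^ (β + 2)) κ 0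
  refine le_of_mul_le_mul_left ?_ hκ
  have hcov' := mul_le_mul_of_nonneg_left hcov (by nlinarith : (0 : ℝ) ≤ (β + 1) * (β + 2))
  linear_combination (β + 1) * M 0 * hC - (β + 2) * (M 0 - M 2) * hB + 2 * hcov'

theorem div_sub_div_sq_nonneg {A B C : ℝ} (hA : 0 < A) (h : B ^ 2 ≤ A * C) :
    0 ≤ C / A - (B / A) ^ 2 := by
  rw [show C / A - (B / A) ^ 2 = (A * C - B ^ 2) / A ^ 2 by field_simp]
  exact div_nonneg (by linarith) (sq_nonneg A)

theorem div_sub_div_sq_le {A B C p : ℝ} (hA : 0 < A) (hp : 2 ≤ p)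
    (h : (p - 1) * (A * C) ≤ (p + 1) * B ^ 2) :
    C / A - (B / A) ^ 2 ≤ 4 * (B / A) ^ 2 / p := by
  have hp_mul : p * (A * C - B ^ 2) ≤ 4 * B ^ 2 := by
    refine le_of_mul_le_mul_left ?_ (by linarith : (0 : ℝ) < p - 1)
    nlinarith [mul_le_mul_of_nonneg_left h (by linarith : (0 : ℝ) ≤ p),
      mul_nonneg (by linarith : (0 : ℝ) ≤ p - 2) (sq_nonneg B)]
  rw [show C / A - (B / A) ^ 2 = (A * C - B ^ 2) / A ^ 2 by field_simp, div_pow, mul_div_assoc',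
    div_div, div_le_div_iff₀ (by positivity) (by positivity)]
  nlinarith [mul_le_mul_of_nonneg_left hp_mul (sq_nonneg A)]

theorem f4_sub_f2_sq_bound :
    ∃ C : ℝ, 0 < C ∧ ∀ p : ℕ, 2 ≤ p → ∀ κ : ℝ, 0 < κ →
      0 ≤ f4 p κ - (f2 p κ) ^ 2 ∧
        f4 p κ - (f2 p κ) ^ 2 ≤ C * (f2 p κ) ^ 2 / (p : ℝ) := by
  refine ⟨4, by norm_num, fun p hp κ hκ => ?_⟩
  have hp : (2 : ℝ) ≤ p := by exact_mod_cast hp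
  set β : ℝ := ((p : ℝ) - 3) / 2 with hβ_def
  have hβ : -(1 / 2) ≤ β := by linarith
  set A := tiltedMoment (fun u => (1 - u ^ 2) ^ β) κ 0
  set B := tiltedMoment (fun u => (1 - u ^ 2) ^ (β + 1)) κ 0
  set C := tiltedMoment (fun u => (1 - u ^ 2) ^ (β + 2)) κ 0
  have hA : 0 < A := tiltedMoment_one_sub_sq_rpow_zero_pos hβ κ
  have hf2 : f2 p κ = B / A := by
    rw [f2, e2, show B = A - tiltedMoment (fun u => (1 - u ^ 2) ^ β) κ 2 from
      tiltedMoment_one_sub_sq_rpow_add_one hβ κ 0, sub_div, div_self hA.ne']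
    rfl
  have hf4 : f4 p κ = C / A := by
    rw [f4, show ((p : ℝ) + 1) / 2 = β + 2 by ring]
    simp [C, A, tiltedMoment, mInt, hβ_def]
  have hup : (p - 1) * (A * C) ≤ (p + 1) * B ^ 2 := by
    have h := mul_tiltedMoment_one_sub_sq_rpow_le hβ hκ
    rw [hβ_def] at h
    linarith
  rw [hf2, hf4]
  exact ⟨div_sub_div_sq_nonneg hA (tiltedMoment_one_sub_sq_rpow_sq_le hβ κ),
    div_sub_div_sq_le hA hp hup⟩
end

section
/- Let (p_n) be a sequence of integers with p_n ≥ 2 for all n and p_n → ∞, and let (κ_n) be a sequence in (0,∞) with κ_n/p_n → ∞. Then e₁(p_n,κ_n) → 1, the sequence κ_n² ẽ₂(p_n,κ_n)/p_n is bounded, and (κ_n/p_n) f₂(p_n,κ_n) → 1 as n → ∞. -/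
open MeasureTheory intervalIntegral Filter

/-- `e₁(p,κ) = E[U]` under `FvML_p(θ,κ)`. -/
noncomputable def e1 (p : ℕ) (κ : ℝ) : ℝ := mInt p κ 1 / mInt p κ 0

/-- `ẽ₂(p,κ) = Var[U]` under `FvML_p(θ,κ)`. -/
noncomputable def etilde2 (p : ℕ) (κ : ℝ) : ℝ := e2 p κ - (e1 p κ) ^ 2

/-!
With `m_ℓ(a) = ∫_{-1}^1 u^ℓ (1-u²)^a e^{κu} du`, integration by parts against the boundary term
`u^ℓ (1-u²)^{a+1} e^{κu}` gives `κ m₀(a+1) = 2(a+1) m₁(a)` and `κ m₁(a+1) + m₀(a+1) = 2(a+1) m₂(a)`,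
and trivially `m₀(a) - m₂(a) = m₀(a+1)`. For `x = e₁(p,κ)` and `y = e₁(p+2,κ)` these say
`f₂(p,κ) = (p-1) x / κ` and `x (κ y + p) = κ`. As `y ≤ 1`, the recurrence gives `κ (1 - x) ≤ p`,
so `e₁ → 1`; eliminating `y` from the Cauchy–Schwarz inequality `y² ≤ e₂(p+2,κ)` by the recurrence
gives `κ² ẽ₂(p,κ) ≤ p x² ≤ p`. The limit of `(κ/p) f₂ = (1 - 1/p) e₁` is then immediate.
-/

noncomputable def weightedMoment (a κ : ℝ) (ℓ : ℕ) : ℝ :=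
  ∫ u in (-1 : ℝ)..1, u ^ ℓ * (1 - u ^ 2) ^ a * Real.exp (κ * u)

section WeightedMoment

variable {a : ℝ}

lemma one_sub_sq_nonneg_of_mem_Icc {u : ℝ} (hu : u ∈ Set.Icc (-1 : ℝ) 1) : 0 ≤ 1 - u ^ 2 := by
  nlinarith [hu.1, hu.2]

lemma continuous_weightedMoment_integrand (ha : 0 ≤ a) (κ : ℝ) (ℓ : ℕ) :
    Continuous fun u : ℝ => u ^ ℓ * (1 - u ^ 2) ^ a * Real.exp (κ * u) := by
  have := Real.continuous_rpow_const ha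
  fun_prop

lemma intervalIntegrable_weightedMoment_integrand (ha : 0 ≤ a) (κ : ℝ) (ℓ : ℕ) :
    IntervalIntegrable (fun u : ℝ => u ^ ℓ * (1 - u ^ 2) ^ a * Real.exp (κ * u)) volume (-1) 1 :=
  (continuous_weightedMoment_integrand ha κ ℓ).intervalIntegrable _ _

lemma weightedMoment_zero_pos (ha : 0 ≤ a) (κ : ℝ) : 0 < weightedMoment a κ 0 := by
  refine intervalIntegral_pos_of_pos_on (intervalIntegrable_weightedMoment_integrand ha κ 0)
    (fun u hu => ?_) (by norm_num)
  have : 0 < 1 - u ^ 2 := by nlinarith [hu.1, hu.2]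
  positivity

lemma integral_quadratic_mul_weight (ha : 0 ≤ a) (κ c₀ c₁ c₂ : ℝ) :
    ∫ u in (-1 : ℝ)..1, (c₀ + c₁ * u + c₂ * u ^ 2) * ((1 - u ^ 2) ^ a * Real.exp (κ * u)) =
      c₀ * weightedMoment a κ 0 + c₁ * weightedMoment a κ 1 + c₂ * weightedMoment a κ 2 := by
  have hi := intervalIntegrable_weightedMoment_integrand ha κ
  rw [weightedMoment, weightedMoment, weightedMoment, ← intervalIntegral.integral_const_mul,
    ← intervalIntegral.integral_const_mul, ← intervalIntegral.integral_const_mul,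
    ← integral_add ((hi 0).const_mul _) ((hi 1).const_mul _),
    ← integral_add (((hi 0).const_mul _).add ((hi 1).const_mul _)) ((hi 2).const_mul _)]
  congr 1 with u
  ring

lemma integral_mul_weight_nonneg (κ : ℝ) {g : ℝ → ℝ} (hg : ∀ u ∈ Set.Icc (-1 : ℝ) 1, 0 ≤ g u) :
    0 ≤ ∫ u in (-1 : ℝ)..1, g u * ((1 - u ^ 2) ^ a * Real.exp (κ * u)) :=
  integral_nonneg (by norm_num) fun u hu => by
    have := Real.rpow_nonneg (one_sub_sq_nonneg_of_mem_Icc hu) a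
    have := hg u hu
    positivity

lemma weightedMoment_one_le_weightedMoment_zero (ha : 0 ≤ a) (κ : ℝ) :
    weightedMoment a κ 1 ≤ weightedMoment a κ 0 := by
  have := integral_mul_weight_nonneg (a := a) κ (g := fun u => 1 - u) fun u hu => by
    linarith [hu.2]
  have h := integral_quadratic_mul_weight ha κ 1 (-1) 0
  simp only [zero_mul, add_zero, ← sub_eq_add_neg, one_mul, neg_one_mul] at h
  linarith

lemma weightedMoment_one_sq_le_mul (ha : 0 ≤ a) (κ : ℝ) :
    weightedMoment a κ 1 ^ 2 ≤ weightedMoment a κ 0 * weightedMoment a κ 2 := by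
  set m₀ := weightedMoment a κ 0
  set m₁ := weightedMoment a κ 1
  have h := integral_mul_weight_nonneg (a := a) κ (g := fun u => (m₁ - m₀ * u) ^ 2)
    fun u _ => sq_nonneg _
  have hq := integral_quadratic_mul_weight ha κ (m₁ ^ 2) (-2 * m₀ * m₁) (m₀ ^ 2)
  have : ∀ u : ℝ, (m₁ - m₀ * u) ^ 2 = m₁ ^ 2 + -2 * m₀ * m₁ * u + m₀ ^ 2 * u ^ 2 := fun u => by ring
  simp only [this, hq] at h
  nlinarith [weightedMoment_zero_pos ha κ]

lemma weightedMoment_sub_weightedMoment_add_two (ha : 0 ≤ a) (κ : ℝ) (ℓ : ℕ) :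
    weightedMoment a κ ℓ - weightedMoment a κ (ℓ + 2) = weightedMoment (a + 1) κ ℓ := by
  have hi := intervalIntegrable_weightedMoment_integrand ha κ
  rw [weightedMoment, weightedMoment, weightedMoment, ← integral_sub (hi ℓ) (hi (ℓ + 2))]
  refine integral_congr fun u hu => ?_
  rw [Set.uIcc_of_le (by norm_num)] at hu
  simp only [Real.rpow_add_one' (one_sub_sq_nonneg_of_mem_Icc hu) (by linarith : a + 1 ≠ 0)]
  ring

lemma hasDerivAt_boundary_term (ha : 0 ≤ a) (κ : ℝ) (ℓ : ℕ) (u : ℝ) :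
    HasDerivAt (fun u : ℝ => u ^ ℓ * (1 - u ^ 2) ^ (a + 1) * Real.exp (κ * u))
      ((ℓ : ℝ) * (u ^ (ℓ - 1) * (1 - u ^ 2) ^ (a + 1) * Real.exp (κ * u))
        - 2 * (a + 1) * (u ^ (ℓ + 1) * (1 - u ^ 2) ^ a * Real.exp (κ * u))
        + κ * (u ^ ℓ * (1 - u ^ 2) ^ (a + 1) * Real.exp (κ * u))) u := by
  have hw : HasDerivAt (fun u : ℝ => (1 - u ^ 2) ^ (a + 1))
      (-(2 * u) * (a + 1) * (1 - u ^ 2) ^ a) u := by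
    simpa using ((hasDerivAt_pow 2 u).const_sub 1).rpow_const (p := a + 1) (Or.inr (by linarith))
  have he : HasDerivAt (fun u : ℝ => Real.exp (κ * u)) (Real.exp (κ * u) * κ) u := by
    simpa using ((hasDerivAt_id u).const_mul κ).exp
  refine (((hasDerivAt_pow ℓ u).fun_mul hw).fun_mul he).congr_deriv ?_
  ring

lemma weightedMoment_integration_by_parts (ha : 0 ≤ a) (κ : ℝ) (ℓ : ℕ) :
    κ * weightedMoment (a + 1) κ ℓ + ℓ * weightedMoment (a + 1) κ (ℓ - 1) =
      2 * (a + 1) * weightedMoment a κ (ℓ + 1) := by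
  have hi := intervalIntegrable_weightedMoment_integrand ha κ
  have hi' := intervalIntegrable_weightedMoment_integrand (by linarith : 0 ≤ a + 1) κ
  have hvanish : ∀ u : ℝ, u ^ 2 = 1 → u ^ ℓ * (1 - u ^ 2) ^ (a + 1) * Real.exp (κ * u) = 0 :=
    fun u hu => by rw [hu, sub_self, Real.zero_rpow (by linarith)]; ring
  have hA := (hi' (ℓ - 1)).const_mul (ℓ : ℝ)
  have hB := (hi (ℓ + 1)).const_mul (2 * (a + 1))
  have hC := (hi' ℓ).const_mul κ
  have h := integral_eq_sub_of_hasDerivAt (fun u _ => hasDerivAt_boundary_term ha κ ℓ u)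
    ((hA.sub hB).add hC)
  rw [hvanish 1 (by norm_num), hvanish (-1) (by norm_num), intervalIntegral.integral_add
    (hA.sub hB) hC, intervalIntegral.integral_sub hA hB, intervalIntegral.integral_const_mul,
    intervalIntegral.integral_const_mul, intervalIntegral.integral_const_mul] at h
  simp only [weightedMoment]
  linarith

end WeightedMoment

section FvML

variable {q : ℕ} {κ : ℝ}

lemma mInt_eq_weightedMoment (q : ℕ) (κ : ℝ) (ℓ : ℕ) :
    mInt q κ ℓ = weightedMoment (((q : ℝ) - 3) / 2) κ ℓ := rfl

lemma mInt_add_two_eq_weightedMoment (q : ℕ) (κ : ℝ) (ℓ : ℕ) :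
    mInt (q + 2) κ ℓ = weightedMoment (((q : ℝ) - 3) / 2 + 1) κ ℓ := by
  rw [mInt_eq_weightedMoment]
  congr 1
  push_cast
  ring

lemma mInt_exponent_nonneg (hq : 3 ≤ q) : 0 ≤ ((q : ℝ) - 3) / 2 := by
  have : (3 : ℝ) ≤ q := by exact_mod_cast hq
  linarith

lemma mInt_zero_pos (hq : 3 ≤ q) (κ : ℝ) : 0 < mInt q κ 0 :=
  weightedMoment_zero_pos (mInt_exponent_nonneg hq) κ

lemma mInt_zero_sub_mInt_two (hq : 3 ≤ q) (κ : ℝ) :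
    mInt q κ 0 - mInt q κ 2 = mInt (q + 2) κ 0 := by
  rw [mInt_add_two_eq_weightedMoment]
  exact weightedMoment_sub_weightedMoment_add_two (mInt_exponent_nonneg hq) κ 0

lemma mul_mInt_add_two_zero (hq : 3 ≤ q) (κ : ℝ) :
    κ * mInt (q + 2) κ 0 = ((q : ℝ) - 1) * mInt q κ 1 := by
  have h := weightedMoment_integration_by_parts (mInt_exponent_nonneg hq) κ 0
  rw [mInt_add_two_eq_weightedMoment, mInt_eq_weightedMoment]
  simp only [CharP.cast_eq_zero, zero_mul, add_zero, zero_add] at h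
  linarith

lemma mul_mInt_add_two_one (hq : 3 ≤ q) (κ : ℝ) :
    κ * mInt (q + 2) κ 1 + mInt (q + 2) κ 0 = ((q : ℝ) - 1) * mInt q κ 2 := by
  have h := weightedMoment_integration_by_parts (mInt_exponent_nonneg hq) κ 1
  rw [mInt_add_two_eq_weightedMoment, mInt_add_two_eq_weightedMoment, mInt_eq_weightedMoment]
  simp only [Nat.cast_one, one_mul, Nat.sub_self, Nat.reduceAdd] at h
  linarith

lemma e1_le_one (hq : 3 ≤ q) (κ : ℝ) : e1 q κ ≤ 1 :=
  div_le_one_of_le₀ (weightedMoment_one_le_weightedMoment_zero (mInt_exponent_nonneg hq) κ)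
    (mInt_zero_pos hq κ).le

lemma e1_sq_le_e2 (hq : 3 ≤ q) (κ : ℝ) : e1 q κ ^ 2 ≤ e2 q κ := by
  have h0 := mInt_zero_pos hq κ
  have hCS : mInt q κ 1 ^ 2 ≤ mInt q κ 0 * mInt q κ 2 :=
    weightedMoment_one_sq_le_mul (mInt_exponent_nonneg hq) κ
  rw [e1, e2, div_pow, div_le_div_iff₀ (by positivity) h0]
  nlinarith [mul_le_mul_of_nonneg_right hCS h0.le]

lemma e1_pos (hq : 3 ≤ q) (hκ : 0 < κ) : 0 < e1 q κ := by
  have hq1 : (0 : ℝ) < q - 1 := by linarith [mInt_exponent_nonneg hq]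
  have h := mul_mInt_add_two_zero hq κ
  have : 0 < ((q : ℝ) - 1) * mInt q κ 1 := h ▸ mul_pos hκ (mInt_zero_pos (by omega) κ)
  exact div_pos (pos_of_mul_pos_right this hq1.le) (mInt_zero_pos hq κ)

lemma f2_eq (hq : 3 ≤ q) (hκ : κ ≠ 0) : f2 q κ = ((q : ℝ) - 1) * e1 q κ / κ := by
  have h0 := (mInt_zero_pos hq κ).ne'
  rw [f2, e2, e1, eq_div_iff hκ, one_sub_div h0, mInt_zero_sub_mInt_two hq, div_mul_eq_mul_div,
    mul_comm _ κ, mul_mInt_add_two_zero hq]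
  ring

lemma e1_mul_eq (hq : 3 ≤ q) (κ : ℝ) : e1 q κ * (κ * e1 (q + 2) κ + q) = κ := by
  have h0 := (mInt_zero_pos hq κ).ne'
  have h0' := (mInt_zero_pos (by omega : 3 ≤ q + 2) κ).ne'
  have hA := mul_mInt_add_two_zero hq κ
  have hB := mul_mInt_add_two_one hq κ
  have hS := mInt_zero_sub_mInt_two hq κ
  rw [e1, e1]
  field_simp
  linear_combination mInt q κ 1 * hB - ((q : ℝ) - 1) * mInt q κ 1 * hS - mInt q κ 0 * hA

lemma e2_eq (hq : 3 ≤ q) (hκ : κ ≠ 0) : κ * e2 q κ = κ - ((q : ℝ) - 1) * e1 q κ := by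
  have h := f2_eq hq hκ
  rw [f2] at h
  field_simp at h
  linarith

lemma mul_one_sub_e1_le (hq : 3 ≤ q) (hκ : 0 < κ) : κ * (1 - e1 q κ) ≤ q := by
  have hrec := e1_mul_eq hq κ
  have hx := e1_pos hq hκ
  have hx1 := e1_le_one hq κ
  have hy1 := e1_le_one (by omega : 3 ≤ q + 2) κ
  nlinarith [mul_nonneg (mul_pos hκ hx).le (sub_nonneg.mpr hy1)]

lemma sq_mul_etilde2_le (hq : 3 ≤ q) (hκ : 0 < κ) : κ ^ 2 * etilde2 q κ ≤ q * e1 q κ ^ 2 := by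
  have hq' : 3 ≤ q + 2 := by omega
  have hrec := e1_mul_eq hq κ
  have he2 := e2_eq hq hκ.ne'
  have he2' := e2_eq hq' hκ.ne'
  have hCS' := e1_sq_le_e2 hq' κ
  push_cast at he2'
  set x := e1 q κ
  set y := e1 (q + 2) κ
  have hquad : κ * y ^ 2 + ((q : ℝ) + 1) * y - κ ≤ 0 := by linear_combination κ * hCS' + he2'
  rw [etilde2]
  linear_combination κ * he2 + (κ * x ^ 2) * hquad - (κ * x * y + κ - q * x + (q + 1) * x) * hrec

lemma one_sub_div_le_e1 (hq : 3 ≤ q) (hκ : 0 < κ) : 1 - q / κ ≤ e1 q κ := by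
  rw [sub_le_comm, le_div_iff₀ hκ, mul_comm]
  exact mul_one_sub_e1_le hq hκ

lemma abs_sq_mul_etilde2_div_le_one (hq : 3 ≤ q) (hκ : 0 < κ) :
    |κ ^ 2 * etilde2 q κ / q| ≤ 1 := by
  have hq0 : (0 : ℝ) < q := by positivity
  have hvar : 0 ≤ etilde2 q κ := sub_nonneg.mpr (e1_sq_le_e2 hq κ)
  have hx1 : e1 q κ ^ 2 ≤ 1 := pow_le_one₀ (e1_pos hq hκ).le (e1_le_one hq κ)
  rw [abs_of_nonneg (by positivity), div_le_one hq0]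
  nlinarith [sq_mul_etilde2_le hq hκ]

lemma div_mul_f2_eq (hq : 3 ≤ q) (hκ : κ ≠ 0) : κ / q * f2 q κ = (1 - (q : ℝ)⁻¹) * e1 q κ := by
  have hq0 : (q : ℝ) ≠ 0 := by positivity
  rw [f2_eq hq hκ]
  field_simp

end FvML

theorem moments_regime_kappa_over_p_to_infty_general (p : ℕ → ℕ)
    (hp : Tendsto (fun n => (p n : ℝ)) atTop atTop)
    (κ : ℕ → ℝ) (hκ : ∀ n, 0 < κ n)
    (hκp : Tendsto (fun n => κ n / (p n : ℝ)) atTop atTop) :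
    Tendsto (fun n => e1 (p n) (κ n)) atTop (nhds 1) ∧
      (∃ C : ℝ, ∀ n, |(κ n) ^ 2 * etilde2 (p n) (κ n) / (p n : ℝ)| ≤ C) ∧
      Tendsto (fun n => (κ n / (p n : ℝ)) * f2 (p n) (κ n)) atTop (nhds 1) := by
  have hp3 : ∀ᶠ n in atTop, 3 ≤ p n := by
    filter_upwards [hp.eventually_ge_atTop 3] with n hn
    exact_mod_cast hn
  have he1 : Tendsto (fun n => e1 (p n) (κ n)) atTop (nhds 1) := by
    have hpκ : Tendsto (fun n => (p n : ℝ) / κ n) atTop (nhds 0) := by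
      simpa only [Pi.inv_def, inv_div] using hκp.inv_tendsto_atTop
    refine tendsto_of_tendsto_of_tendsto_of_le_of_le' (by simpa using hpκ.const_sub 1)
      tendsto_const_nhds ?_ ?_
    · filter_upwards [hp3] with n hn using one_sub_div_le_e1 hn (hκ n)
    · filter_upwards [hp3] with n hn using e1_le_one hn (κ n)
  refine ⟨he1, ?_, ?_⟩
  · have hbdd : IsBoundedUnder (· ≤ ·) atTop
        fun n => |(κ n) ^ 2 * etilde2 (p n) (κ n) / (p n : ℝ)| :=
      ⟨1, eventually_map.mpr (hp3.mono fun n hn => abs_sq_mul_etilde2_div_le_one hn (hκ n))⟩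
    obtain ⟨C, hC⟩ := hbdd.bddAbove_range
    exact ⟨C, fun n => hC ⟨n, rfl⟩⟩
  · have hfrac : Tendsto (fun n => 1 - (p n : ℝ)⁻¹) atTop (nhds 1) := by
      simpa using (tendsto_inv_atTop_zero.comp hp).const_sub 1
    refine Tendsto.congr' ?_ (by simpa using hfrac.mul he1)
    filter_upwards [hp3] with n hn using (div_mul_f2_eq hn (hκ n).ne').symm

theorem moments_regime_kappa_over_p_to_infty (p : ℕ → ℕ) (hp2 : ∀ n, 2 ≤ p n)
    (hp : Tendsto (fun n => (p n : ℝ)) atTop atTop)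
    (κ : ℕ → ℝ) (hκ : ∀ n, 0 < κ n)
    (hκp : Tendsto (fun n => κ n / (p n : ℝ)) atTop atTop) :
    Tendsto (fun n => e1 (p n) (κ n)) atTop (nhds 1) ∧
      (∃ C : ℝ, ∀ n, |(κ n) ^ 2 * etilde2 (p n) (κ n) / (p n : ℝ)| ≤ C) ∧
      Tendsto (fun n => (κ n / (p n : ℝ)) * f2 (p n) (κ n)) atTop (nhds 1) :=
  moments_regime_kappa_over_p_to_infty_general p hp κ hκ hκp
end

section
/- Let (p_n) be a sequence of integers with p_n ≥ 2 for all n and p_n → ∞, and let (κ_n) be a sequence in (0,∞) with κ_n/p_n → 0. Then the sequence (p_n³/κ_n³)(e₁(p_n,κ_n) − κ_n/p_n) is bounded, p_n ẽ₂(p_n,κ_n) → 1, and f₂(p_n,κ_n) → 1 as n → ∞. -/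
open MeasureTheory intervalIntegral Filter

/-!
Integrating by parts against the weight `w(u) = (1-u²)^{(p-3)/2} e^{κu}` on `[-1,1]` gives the
Stein identity `E[g'(U)(1-U²) + (κ(1-U²) - (p-1)U) g(U)] = 0`; the boundary terms vanish because
`(1-u²)^{(p-1)/2}` does at `±1`. For `g = 1` and `g = (p+1)u + κ(1-u²)` it yields
`(p-1) E[U] = κ (1 - E[U²])` and `p(p+1) E[U²] = (p+1) + κ² E[(1-U²)²]`, with `E[(1-U²)²] ∈ [0,1]`.
The bound on `e₁` and the limit of `f₂` follow at once: `e₁ - κ/p = O(κ³/p³)` and `E[U²] ≤ 1/p + (κ/p)²`.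
For the variance, the two relations give
`p Var U - 1 = κ² Var(1-U²)/(p+1) - O((κ/p)²)`, and `Var(1-U²) ≤ 4 Var U` because `u ↦ 1-u²` is
`2`-Lipschitz on `[-1,1]`; so `|p Var U - 1| ≤ (κ/p)² (12 + 4 p Var U)`, which forces
`p Var U → 1` when `κ/p → 0`.
-/

open Set

namespace FvML

lemma intervalIntegrable_one_sub_sq_rpow {s : ℝ} (hs : -1 < s) :
    IntervalIntegrable (fun u : ℝ => (1 - u ^ 2) ^ s) volume (-1) 1 := by
  have hplus : IntervalIntegrable (fun u : ℝ => (1 + u) ^ s) volume (-1) 0 := by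
    simpa using (intervalIntegrable_rpow' hs (a := 0) (b := 1)).comp_add_left 1
  have hminus : IntervalIntegrable (fun u : ℝ => (1 - u) ^ s) volume 0 1 := by
    simpa using ((intervalIntegrable_rpow' hs (a := 0) (b := 1)).comp_sub_left 1).symm
  -- each factor is singular at one endpoint only, where the other factor is continuous
  have left : IntervalIntegrable (fun u : ℝ => (1 - u) ^ s * (1 + u) ^ s) volume (-1) 0 := by
    refine hplus.continuousOn_mul fun u hu => ContinuousAt.continuousWithinAt ?_
    rw [uIcc_of_le (by norm_num)] at hu
    exact (continuousAt_const.sub continuousAt_id).rpow_const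
      (Or.inl (show (1 : ℝ) - u ≠ 0 by linarith [hu.2]))
  have right : IntervalIntegrable (fun u : ℝ => (1 - u) ^ s * (1 + u) ^ s) volume 0 1 := by
    refine hminus.mul_continuousOn fun u hu => ContinuousAt.continuousWithinAt ?_
    rw [uIcc_of_le (by norm_num)] at hu
    exact (continuousAt_const.add continuousAt_id).rpow_const
      (Or.inl (show (1 : ℝ) + u ≠ 0 by linarith [hu.1]))
  refine (left.trans right).congr fun u hu => ?_
  rw [uIoc_of_le (by norm_num)] at hu
  rw [← Real.mul_rpow (by linarith [hu.2]) (by linarith [hu.1])]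
  ring_nf

/-- The density of `U = X'θ` for `X ∼ FvML_p(θ,κ)`, up to normalisation. -/
noncomputable def weight (p : ℕ) (κ u : ℝ) : ℝ :=
  (1 - u ^ 2) ^ (((p : ℝ) - 3) / 2) * Real.exp (κ * u)

noncomputable def expect (p : ℕ) (κ : ℝ) (g : ℝ → ℝ) : ℝ :=
  (∫ u in (-1 : ℝ)..1, g u * weight p κ u) / mInt p κ 0

variable {p : ℕ} {κ : ℝ}

lemma intervalIntegrable_mul_weight (hp : 2 ≤ p) {g : ℝ → ℝ} (hg : Continuous g) :
    IntervalIntegrable (fun u => g u * weight p κ u) volume (-1) 1 := by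
  have hs : -1 < ((p : ℝ) - 3) / 2 := by
    have : (2 : ℝ) ≤ p := by exact_mod_cast hp
    linarith
  refine ((intervalIntegrable_one_sub_sq_rpow hs).mul_continuousOn
    (g := fun u => g u * Real.exp (κ * u)) (by fun_prop)).congr fun u _ => ?_
  simp only [weight]
  ring

lemma mInt_eq_integral_mul_weight (ℓ : ℕ) :
    mInt p κ ℓ = ∫ u in (-1 : ℝ)..1, u ^ ℓ * weight p κ u := by
  simp only [mInt, weight, mul_assoc]

lemma weight_pos {u : ℝ} (hu : u ∈ Ioo (-1) 1) : 0 < weight p κ u := by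
  have : 0 < 1 - u ^ 2 := by nlinarith [hu.1, hu.2]
  unfold weight
  positivity

lemma weight_nonneg {u : ℝ} (hu : u ∈ Icc (-1) 1) : 0 ≤ weight p κ u := by
  have : 0 ≤ 1 - u ^ 2 := by nlinarith [hu.1, hu.2]
  unfold weight
  positivity

lemma mInt_zero_pos (hp : 2 ≤ p) : 0 < mInt p κ 0 := by
  rw [mInt_eq_integral_mul_weight]
  refine intervalIntegral_pos_of_pos_on ?_ (fun u hu => by simpa using weight_pos hu) (by norm_num)
  exact intervalIntegrable_mul_weight hp (continuous_pow 0)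

lemma expect_pow (ℓ : ℕ) : expect p κ (· ^ ℓ) = mInt p κ ℓ / mInt p κ 0 := by
  rw [expect, mInt_eq_integral_mul_weight ℓ]

lemma expect_const (hp : 2 ≤ p) (c : ℝ) : expect p κ (fun _ => c) = c := by
  have h : ∫ u in (-1 : ℝ)..1, weight p κ u = mInt p κ 0 := by
    simp [mInt_eq_integral_mul_weight]
  rw [expect, intervalIntegral.integral_const_mul, h, mul_div_assoc,
    div_self (mInt_zero_pos hp).ne', mul_one]

lemma expect_const_mul (c : ℝ) (g : ℝ → ℝ) :
    expect p κ (fun u => c * g u) = c * expect p κ g := by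
  simp only [expect, mul_assoc, intervalIntegral.integral_const_mul, mul_div_assoc]

lemma expect_add (hp : 2 ≤ p) {f g : ℝ → ℝ} (hf : Continuous f) (hg : Continuous g) :
    expect p κ (fun u => f u + g u) = expect p κ f + expect p κ g := by
  simp only [expect, add_mul, ← add_div]
  rw [intervalIntegral.integral_add (intervalIntegrable_mul_weight hp hf)
    (intervalIntegrable_mul_weight hp hg)]

lemma expect_sub (hp : 2 ≤ p) {f g : ℝ → ℝ} (hf : Continuous f) (hg : Continuous g) :
    expect p κ (fun u => f u - g u) = expect p κ f - expect p κ g := by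
  simp only [expect, sub_mul, ← sub_div]
  rw [intervalIntegral.integral_sub (intervalIntegrable_mul_weight hp hf)
    (intervalIntegrable_mul_weight hp hg)]

lemma expect_nonneg {f : ℝ → ℝ} (hf : ∀ u ∈ Icc (-1 : ℝ) 1, 0 ≤ f u) : 0 ≤ expect p κ f := by
  refine div_nonneg (intervalIntegral.integral_nonneg (by norm_num) fun u hu =>
    mul_nonneg (hf u hu) (weight_nonneg hu)) ?_
  rw [mInt_eq_integral_mul_weight]
  exact intervalIntegral.integral_nonneg (by norm_num) fun u hu => by
    simpa using weight_nonneg (p := p) (κ := κ) hu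

lemma expect_mono (hp : 2 ≤ p) {f g : ℝ → ℝ} (hf : Continuous f) (hg : Continuous g)
    (hfg : ∀ u ∈ Icc (-1 : ℝ) 1, f u ≤ g u) : expect p κ f ≤ expect p κ g := by
  refine div_le_div_of_nonneg_right ?_ (mInt_zero_pos hp).le
  refine intervalIntegral.integral_mono_on (by norm_num) (intervalIntegrable_mul_weight hp hf)
    (intervalIntegrable_mul_weight hp hg) fun u hu => ?_
  exact mul_le_mul_of_nonneg_right (hfg u hu) (weight_nonneg hu)

lemma one_sub_sq_rpow_eq_mul {u : ℝ} (hu : u ∈ Ioo (-1) 1) :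
    (1 - u ^ 2) ^ (((p : ℝ) - 1) / 2) = (1 - u ^ 2) * (1 - u ^ 2) ^ (((p : ℝ) - 3) / 2) := by
  have hpos : 0 < 1 - u ^ 2 := by nlinarith [hu.1, hu.2]
  rw [show ((p : ℝ) - 1) / 2 = 1 + ((p : ℝ) - 3) / 2 by ring, Real.rpow_add hpos, Real.rpow_one]

lemma hasDerivAt_one_sub_sq_rpow_mul_exp {u : ℝ} (hu : u ∈ Ioo (-1) 1) :
    HasDerivAt (fun v => (1 - v ^ 2) ^ (((p : ℝ) - 1) / 2) * Real.exp (κ * v))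
      ((κ * (1 - u ^ 2) - (p - 1) * u) * weight p κ u) u := by
  have hpos : 0 < 1 - u ^ 2 := by nlinarith [hu.1, hu.2]
  have hbase : HasDerivAt (fun v : ℝ => 1 - v ^ 2) (-(2 * u)) u := by
    simpa using (hasDerivAt_pow 2 u).const_sub 1
  have hexp : HasDerivAt (fun v => Real.exp (κ * v)) (κ * Real.exp (κ * u)) u := by
    simpa [mul_comm] using ((hasDerivAt_id u).const_mul κ).exp
  refine ((hbase.rpow_const (p := ((p : ℝ) - 1) / 2) (Or.inl hpos.ne')).mul hexp).congr_deriv ?_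
  rw [one_sub_sq_rpow_eq_mul hu, show ((p : ℝ) - 1) / 2 - 1 = ((p : ℝ) - 3) / 2 by ring, weight]
  ring

lemma expect_stein (hp : 2 ≤ p) {g g' : ℝ → ℝ} (hg : ∀ u, HasDerivAt g (g' u) u)
    (hg' : Continuous g') :
    expect p κ (fun u => g' u * (1 - u ^ 2) + (κ * (1 - u ^ 2) - (p - 1) * u) * g u) = 0 := by
  have hgc : Continuous g := continuous_iff_continuousAt.2 fun u => (hg u).continuousAt
  have hq : 0 < ((p : ℝ) - 1) / 2 := by
    have : (2 : ℝ) ≤ p := by exact_mod_cast hp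
    linarith
  set F := fun v => g v * ((1 - v ^ 2) ^ (((p : ℝ) - 1) / 2) * Real.exp (κ * v))
  have hF : ∀ u ∈ Ioo (-1 : ℝ) 1, HasDerivAt F
      ((g' u * (1 - u ^ 2) + (κ * (1 - u ^ 2) - (p - 1) * u) * g u) * weight p κ u) u := by
    intro u hu
    refine ((hg u).mul (hasDerivAt_one_sub_sq_rpow_mul_exp (p := p) (κ := κ) hu)).congr_deriv ?_
    rw [one_sub_sq_rpow_eq_mul hu, weight]
    ring
  rw [expect, integral_eq_sub_of_hasDerivAt_of_le (by norm_num) _ hF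
    (intervalIntegrable_mul_weight hp (by fun_prop))]
  · simp [F, Real.zero_rpow hq.ne']
  · have hrpow : Continuous fun v : ℝ => (1 - v ^ 2) ^ (((p : ℝ) - 1) / 2) :=
      (by fun_prop : Continuous fun v : ℝ => 1 - v ^ 2).rpow_const fun _ => Or.inr hq.le
    exact (hgc.mul (hrpow.mul (by fun_prop))).continuousOn

lemma e1_eq_expect : e1 p κ = expect p κ (fun u => u) := by
  simp [e1, ← expect_pow]

lemma e2_eq_expect : e2 p κ = expect p κ (fun u => u ^ 2) := by
  rw [e2, ← expect_pow]

lemma sub_one_mul_e1 (hp : 2 ≤ p) : ((p : ℝ) - 1) * e1 p κ = κ * (1 - e2 p κ) := by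
  have h := expect_stein (κ := κ) hp (g := fun _ => 1) (g' := fun _ => 0)
    (fun _ => hasDerivAt_const _ _) continuous_const
  simp only [zero_mul, zero_add, mul_one] at h
  simp (disch := fun_prop) only [expect_sub hp, expect_const_mul, expect_const hp] at h
  rw [expect_const_mul _ (fun u => u)] at h
  rw [e1_eq_expect, e2_eq_expect]
  linarith

lemma mul_succ_mul_e2 (hp : 2 ≤ p) :
    (p : ℝ) * (p + 1) * e2 p κ = (p + 1) + κ ^ 2 * expect p κ (fun u => (1 - u ^ 2) ^ 2) := by
  have hg : ∀ u : ℝ, HasDerivAt (fun v => (p + 1) * v + κ * (1 - v ^ 2))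
      ((p + 1) - κ * (2 * u)) u := fun u =>
    (((hasDerivAt_id u).const_mul _).add
      (((hasDerivAt_pow 2 u).const_sub 1).const_mul κ)).congr_deriv (by ring)
  -- this `g` eliminates both `E[U]` and `E[U³]`
  have h := expect_stein (κ := κ) hp hg (by fun_prop)
  have hpoint : (fun u : ℝ => ((p + 1) - κ * (2 * u)) * (1 - u ^ 2)
      + (κ * (1 - u ^ 2) - (p - 1) * u) * ((p + 1) * u + κ * (1 - u ^ 2)))
      = fun u => (p + 1) * (1 - p * u ^ 2) + κ ^ 2 * (1 - u ^ 2) ^ 2 := by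
    funext u
    ring
  rw [hpoint] at h
  simp (disch := fun_prop) only [expect_add hp, expect_sub hp, expect_const_mul,
    expect_const hp] at h
  rw [e2_eq_expect]
  linarith

noncomputable def variance (p : ℕ) (κ : ℝ) (g : ℝ → ℝ) : ℝ :=
  expect p κ (fun u => (g u - expect p κ g) ^ 2)

lemma expect_sq_eq_variance_add (hp : 2 ≤ p) {g : ℝ → ℝ} (hg : Continuous g) :
    expect p κ (fun u => g u ^ 2) = variance p κ g + expect p κ g ^ 2 := by
  have hexpand : (fun u => (g u - expect p κ g) ^ 2)
      = fun u => g u ^ 2 - (2 * expect p κ g * g u - expect p κ g ^ 2) := by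
    funext u
    ring
  rw [variance, hexpand]
  simp (disch := fun_prop) only [expect_sub hp, expect_const_mul, expect_const hp]
  ring

lemma variance_nonneg (g : ℝ → ℝ) : 0 ≤ variance p κ g :=
  expect_nonneg fun _ _ => sq_nonneg _

lemma variance_le_expect_sq_sub (hp : 2 ≤ p) {g : ℝ → ℝ} (hg : Continuous g) (c : ℝ) :
    variance p κ g ≤ expect p κ (fun u => (g u - c) ^ 2) := by
  have hexpand : (fun u => (g u - c) ^ 2) = fun u => g u ^ 2 - (2 * c * g u - c ^ 2) := by
    funext u
    ring
  rw [hexpand]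
  simp (disch := fun_prop) only [expect_sub hp, expect_const_mul, expect_const hp]
  rw [expect_sq_eq_variance_add hp hg]
  nlinarith [sq_nonneg (expect p κ g - c)]

lemma etilde2_eq_variance (hp : 2 ≤ p) : etilde2 p κ = variance p κ (fun u => u) := by
  rw [etilde2, e1_eq_expect, e2_eq_expect,
    expect_sq_eq_variance_add hp (g := fun u => u) continuous_id]
  ring

lemma expect_mem_Icc (hp : 2 ≤ p) : expect p κ (fun u => u) ∈ Icc (-1) 1 := by
  constructor
  · simpa only [expect_const hp] using
      expect_mono (κ := κ) (f := fun _ => -1) (g := fun u => u) hp continuous_const continuous_id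
        fun _ hu => hu.1
  · simpa only [expect_const hp] using
      expect_mono (κ := κ) (f := fun u => u) (g := fun _ => 1) hp continuous_id continuous_const
        fun _ hu => hu.2

lemma variance_comp_le (hp : 2 ≤ p) {h : ℝ → ℝ} (hh : Continuous h) {L : ℝ}
    (hL : ∀ x ∈ Icc (-1 : ℝ) 1, ∀ y ∈ Icc (-1 : ℝ) 1, |h x - h y| ≤ L * |x - y|) :
    variance p κ h ≤ L ^ 2 * variance p κ (fun u => u) := by
  set A := expect p κ (fun u => u)
  calc variance p κ h ≤ expect p κ (fun u => (h u - h A) ^ 2) :=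
        variance_le_expect_sq_sub hp hh _
    _ ≤ expect p κ (fun u => L ^ 2 * (u - A) ^ 2) := by
        refine expect_mono hp (by fun_prop) (by fun_prop) fun u hu => ?_
        rw [← sq_abs, ← sq_abs (u - A), ← mul_pow]
        exact pow_le_pow_left₀ (abs_nonneg _) (hL u hu A (expect_mem_Icc hp)) 2
    _ = L ^ 2 * variance p κ (fun u => u) := expect_const_mul _ _

lemma e2_mem_Icc (hp : 2 ≤ p) : e2 p κ ∈ Icc 0 1 := by
  rw [e2_eq_expect]
  refine ⟨expect_nonneg fun u _ => sq_nonneg u, ?_⟩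
  simpa only [expect_const hp] using expect_mono (κ := κ) (f := fun u => u ^ 2) (g := fun _ => 1)
    hp (by fun_prop) continuous_const fun u hu => by nlinarith [hu.1, hu.2]

lemma expect_one_sub_sq_sq_mem_Icc (hp : 2 ≤ p) :
    expect p κ (fun u => (1 - u ^ 2) ^ 2) ∈ Icc 0 1 := by
  refine ⟨expect_nonneg fun u _ => sq_nonneg _, ?_⟩
  simpa only [expect_const hp] using expect_mono (κ := κ) (f := fun u => (1 - u ^ 2) ^ 2)
    (g := fun _ => 1) hp (by fun_prop) continuous_const fun u hu => by
      have : u ^ 2 ≤ 1 := by nlinarith [hu.1, hu.2]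
      nlinarith [sq_nonneg u]

lemma expect_one_sub_sq_sq_eq (hp : 2 ≤ p) :
    expect p κ (fun u => (1 - u ^ 2) ^ 2)
      = variance p κ (fun u => 1 - u ^ 2) + (1 - e2 p κ) ^ 2 := by
  rw [expect_sq_eq_variance_add hp (by fun_prop), e2_eq_expect]
  simp (disch := fun_prop) only [expect_sub hp, expect_const hp]

lemma variance_one_sub_sq_le (hp : 2 ≤ p) :
    variance p κ (fun u => 1 - u ^ 2) ≤ 4 * etilde2 p κ := by
  rw [etilde2_eq_variance hp, show (4 : ℝ) = 2 ^ 2 by norm_num]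
  refine variance_comp_le hp (by fun_prop) fun x hx y hy => ?_
  rw [show 1 - x ^ 2 - (1 - y ^ 2) = -(x + y) * (x - y) by ring, abs_mul, abs_neg]
  gcongr
  exact abs_le.2 ⟨by linarith [hx.1, hy.1], by linarith [hx.2, hy.2]⟩

lemma e1_sub_div_eq (hp : 2 ≤ p) :
    e1 p κ - κ / p
      = -(κ ^ 3 * expect p κ (fun u => (1 - u ^ 2) ^ 2)) / (p * ((p - 1) * (p + 1))) := by
  have hP : (2 : ℝ) ≤ p := by exact_mod_cast hp
  have hA := sub_one_mul_e1 (κ := κ) hp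
  have hB := mul_succ_mul_e2 (κ := κ) hp
  have h₀ : (p : ℝ) ≠ 0 := by positivity
  have h₁ : (p : ℝ) - 1 ≠ 0 := by linarith
  have h₂ : (p : ℝ) + 1 ≠ 0 := by positivity
  field_simp
  linear_combination (p * (p + 1)) * hA - κ * hB

lemma mul_etilde2_sub_one_eq (hp : 2 ≤ p) :
    p * etilde2 p κ - 1
      = κ ^ 2 * variance p κ (fun u => 1 - u ^ 2) / (p + 1)
        - κ ^ 2 * (1 - e2 p κ) ^ 2 * (3 * p - 1) / ((p + 1) * (p - 1) ^ 2) := by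
  have hP : (2 : ℝ) ≤ p := by exact_mod_cast hp
  have hA := sub_one_mul_e1 (κ := κ) hp
  have hB := mul_succ_mul_e2 (κ := κ) hp
  rw [expect_one_sub_sq_sq_eq hp] at hB
  have h₁ : (p : ℝ) - 1 ≠ 0 := by linarith
  have h₂ : (p : ℝ) + 1 ≠ 0 := by positivity
  rw [etilde2]
  field_simp
  linear_combination
    ((p : ℝ) - 1) ^ 2 * hB - (p * (p + 1) * ((p - 1) * e1 p κ + κ * (1 - e2 p κ))) * hA

lemma abs_cube_mul_e1_sub_le (hp : 2 ≤ p) : |((p : ℝ) ^ 3 / κ ^ 3) * (e1 p κ - κ / p)| ≤ 2 := by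
  rcases eq_or_ne κ 0 with rfl | hκ
  · simp
  have hP : (2 : ℝ) ≤ p := by exact_mod_cast hp
  obtain ⟨hQ₀, hQ₁⟩ := expect_one_sub_sq_sq_mem_Icc (κ := κ) hp
  set Q := expect p κ (fun u => (1 - u ^ 2) ^ 2)
  have hden : (0 : ℝ) < (p - 1) * (p + 1) := by nlinarith
  have hsimp : ((p : ℝ) ^ 3 / κ ^ 3) * (-(κ ^ 3 * Q) / (p * ((p - 1) * (p + 1))))
      = -((p : ℝ) ^ 2 * Q / ((p - 1) * (p + 1))) := by
    field_simp
  rw [e1_sub_div_eq hp, hsimp, abs_neg, abs_of_nonneg (by positivity), div_le_iff₀ hden]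
  nlinarith

lemma e2_le (hp : 2 ≤ p) : e2 p κ ≤ 1 / p + (κ / p) ^ 2 := by
  have hP : (2 : ℝ) ≤ p := by exact_mod_cast hp
  obtain ⟨hQ₀, hQ₁⟩ := expect_one_sub_sq_sq_mem_Icc (κ := κ) hp
  have hB := mul_succ_mul_e2 (κ := κ) hp
  have h₀ : (p : ℝ) ≠ 0 := by positivity
  have h₂ : (p : ℝ) + 1 ≠ 0 := by positivity
  have he2 : e2 p κ = 1 / p + κ ^ 2 * expect p κ (fun u => (1 - u ^ 2) ^ 2) / (p * (p + 1)) := by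
    field_simp
    linear_combination hB
  have hrest : κ ^ 2 * expect p κ (fun u => (1 - u ^ 2) ^ 2) / (p * (p + 1)) ≤ (κ / p) ^ 2 :=
    calc _ ≤ κ ^ 2 * 1 / (p * p) := by gcongr; linarith
      _ = (κ / p) ^ 2 := by ring
  linarith

lemma abs_mul_etilde2_sub_one_le (hp : 2 ≤ p) :
    |p * etilde2 p κ - 1| ≤ 12 * (κ / p) ^ 2 + 4 * (κ / p) ^ 2 * (p * etilde2 p κ) := by
  have hP : (2 : ℝ) ≤ p := by exact_mod_cast hp
  obtain ⟨hB₀, hB₁⟩ := e2_mem_Icc (κ := κ) hp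
  have hV : 0 ≤ etilde2 p κ := etilde2_eq_variance (κ := κ) hp ▸ variance_nonneg _
  have hW₀ := variance_nonneg (p := p) (κ := κ) (fun u => 1 - u ^ 2)
  have hW := variance_one_sub_sq_le (κ := κ) hp
  have hfrac : (3 * (p : ℝ) - 1) / ((p + 1) * (p - 1) ^ 2) ≤ 12 / p ^ 2 := by
    rw [div_le_div_iff₀ (by nlinarith) (by positivity)]
    nlinarith
  have hcurv : κ ^ 2 * (1 - e2 p κ) ^ 2 * (3 * p - 1) / ((p + 1) * (p - 1) ^ 2)
      ≤ 12 * (κ / p) ^ 2 :=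
    calc _ = κ ^ 2 * (1 - e2 p κ) ^ 2 * ((3 * p - 1) / ((p + 1) * (p - 1) ^ 2)) := by ring
      _ ≤ κ ^ 2 * 1 * (12 / p ^ 2) := by
        have : 0 ≤ (3 * (p : ℝ) - 1) / ((p + 1) * (p - 1) ^ 2) :=
          div_nonneg (by linarith) (by positivity)
        gcongr
        nlinarith
      _ = 12 * (κ / p) ^ 2 := by ring
  have hspread : κ ^ 2 * variance p κ (fun u => 1 - u ^ 2) / (p + 1)
      ≤ 4 * (κ / p) ^ 2 * (p * etilde2 p κ) :=
    calc _ ≤ κ ^ 2 * (4 * etilde2 p κ) / p := by gcongr; linarith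
      _ = 4 * (κ / p) ^ 2 * (p * etilde2 p κ) := by field_simp
  have hcurv₀ : 0 ≤ κ ^ 2 * (1 - e2 p κ) ^ 2 * (3 * p - 1) / ((p + 1) * (p - 1) ^ 2) := by
    have : (0 : ℝ) ≤ 3 * p - 1 := by linarith
    positivity
  have hspread₀ : 0 ≤ κ ^ 2 * variance p κ (fun u => 1 - u ^ 2) / (p + 1) := by positivity
  have hrhs : 0 ≤ 4 * (κ / p) ^ 2 * (p * etilde2 p κ) := by positivity
  rw [mul_etilde2_sub_one_eq hp]
  refine abs_sub_le_iff.2 ⟨?_, ?_⟩ <;> linarith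

end FvML

lemma tendsto_one_of_abs_sub_one_le {α : Type*} {l : Filter α} {x a b : α → ℝ}
    (ha : Tendsto a l (nhds 0)) (hb : Tendsto b l (nhds 0))
    (h : ∀ᶠ n in l, |x n - 1| ≤ a n + b n * x n) : Tendsto x l (nhds 1) := by
  have hb' : ∀ᶠ n in l, |b n| ≤ 1 / 2 := by
    simpa only [Real.norm_eq_abs] using hb.norm.eventually (eventually_le_nhds (by norm_num))
  have hbound : ∀ᶠ n in l, ‖x n - 1‖ ≤ 2 * (a n + |b n|) := by
    filter_upwards [h, hb'] with n hn hbn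
    have : b n * (x n - 1) ≤ |b n| * |x n - 1| := by
      rw [← abs_mul]
      exact le_abs_self _
    rw [Real.norm_eq_abs]
    nlinarith [abs_nonneg (x n - 1), abs_nonneg (b n), le_abs_self (b n)]
  have hlim : Tendsto (fun n => 2 * (a n + |b n|)) l (nhds 0) := by
    simpa using (ha.add hb.abs).const_mul 2
  exact tendsto_sub_nhds_zero_iff.mp (squeeze_zero_norm' hbound hlim)

open FvML

theorem moments_regime_kappa_over_p_to_zero_general (p : ℕ → ℕ) (hp2 : ∀ n, 2 ≤ p n)
    (hp : Tendsto (fun n => (p n : ℝ)) atTop atTop)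
    (κ : ℕ → ℝ)
    (hκp : Tendsto (fun n => κ n / (p n : ℝ)) atTop (nhds 0)) :
    (∃ C : ℝ, ∀ n,
        |((p n : ℝ) ^ 3 / (κ n) ^ 3) * (e1 (p n) (κ n) - κ n / (p n : ℝ))| ≤ C) ∧
      Tendsto (fun n => (p n : ℝ) * etilde2 (p n) (κ n)) atTop (nhds 1) ∧
      Tendsto (fun n => f2 (p n) (κ n)) atTop (nhds 1) := by
  have ht : Tendsto (fun n => (κ n / p n) ^ 2) atTop (nhds 0) := by
    simpa using hκp.pow 2
  have hinv : Tendsto (fun n => 1 / (p n : ℝ)) atTop (nhds 0) := by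
    simpa only [one_div, Pi.inv_def] using hp.inv_tendsto_atTop
  refine ⟨⟨2, fun n => abs_cube_mul_e1_sub_le (hp2 n)⟩, ?_, ?_⟩
  · refine tendsto_one_of_abs_sub_one_le (by simpa using ht.const_mul 12)
      (by simpa using ht.const_mul 4) (Eventually.of_forall fun n => ?_)
    exact abs_mul_etilde2_sub_one_le (hp2 n)
  · have he2 : Tendsto (fun n => e2 (p n) (κ n)) atTop (nhds 0) :=
      squeeze_zero (fun n => (e2_mem_Icc (hp2 n)).1) (fun n => e2_le (hp2 n))
        (by simpa using hinv.add ht)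
    simpa [f2] using he2.const_sub 1

theorem moments_regime_kappa_over_p_to_zero (p : ℕ → ℕ) (hp2 : ∀ n, 2 ≤ p n)
    (hp : Tendsto (fun n => (p n : ℝ)) atTop atTop)
    (κ : ℕ → ℝ) (hκ : ∀ n, 0 < κ n)
    (hκp : Tendsto (fun n => κ n / (p n : ℝ)) atTop (nhds 0)) :
    (∃ C : ℝ, ∀ n,
        |((p n : ℝ) ^ 3 / (κ n) ^ 3) * (e1 (p n) (κ n) - κ n / (p n : ℝ))| ≤ C) ∧
      Tendsto (fun n => (p n : ℝ) * etilde2 (p n) (κ n)) atTop (nhds 1) ∧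
      Tendsto (fun n => f2 (p n) (κ n)) atTop (nhds 1) :=
  moments_regime_kappa_over_p_to_zero_general p hp2 hp κ hκp
end

section
/- Let (p_n) be a sequence of integers with p_n ≥ 2 for all n and p_n → ∞, and let (κ_n) be a sequence in (0,∞) with κ_n/p_n → 0. Then the sequence (p_n²/κ_n²)( √(p_n ẽ₂(p_n,κ_n)) − 1 ) is bounded; that is, √(p_n ẽ₂(p_n,κ_n)) − 1 = O(κ_n²/p_n²) as n → ∞. -/
open MeasureTheory intervalIntegral Filter

/-!
With `M j := m₀(p + 2j, κ)` and `r j := M (j + 1) / M j`, integration by parts gives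
`e₁ = κ r₀ / (p - 1)`, `e₂ = 1 - r₀` and the three-term recurrence
`(p + 2j)(p + 2j + 1)(1 - r j) = (p + 2j + 1) + κ² r j r (j + 1)`, whence
`p ẽ₂ - 1 = κ² (r₀ r₁ / (p + 1) - p r₀² / (p - 1)²)`, so it suffices that
`|r₀ - r₁| = O(1/p)`.
Subtracting consecutive instances of the recurrence bounds `|r j - r (j + 1)|` by
`2/p + (κ/p)² (|r j - r (j + 1)| + |r (j + 1) - r (j + 2)|)`; for `κ ≤ p/2` this is a
contraction, and passing to the supremum over `j` gives `|r j - r (j + 1)| ≤ 4/p`.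
-/

/-- `mInt p κ ℓ = moment ((p - 3) / 2) κ ℓ`; with a real exponent the shift `p ↦ p + 2` is
`α ↦ α + 1`. -/
noncomputable def moment (α κ : ℝ) (ℓ : ℕ) : ℝ :=
  ∫ u in (-1 : ℝ)..1, u ^ ℓ * (1 - u ^ 2) ^ α * Real.exp (κ * u)

section moment

variable {α : ℝ} (κ : ℝ)

lemma intervalIntegrable_moment_integrand (hα : 0 ≤ α) (ℓ : ℕ) :
    IntervalIntegrable (fun u : ℝ => u ^ ℓ * (1 - u ^ 2) ^ α * Real.exp (κ * u))
      volume (-1) 1 :=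
  Continuous.intervalIntegrable (by fun_prop (disch := exact fun _ => Or.inr hα)) _ _

lemma moment_zero_pos (hα : 0 ≤ α) : 0 < moment α κ 0 := by
  refine intervalIntegral_pos_of_pos_on (intervalIntegrable_moment_integrand κ hα 0)
    (fun u hu => ?_) (by norm_num)
  have : 0 < 1 - u ^ 2 := by nlinarith [hu.1, hu.2]
  positivity

lemma moment_add_one (hα : 0 ≤ α) (ℓ : ℕ) :
    moment (α + 1) κ ℓ = moment α κ ℓ - moment α κ (ℓ + 2) := by
  rw [moment, moment, moment, ← integral_sub (intervalIntegrable_moment_integrand κ hα ℓ)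
    (intervalIntegrable_moment_integrand κ hα (ℓ + 2))]
  refine integral_congr fun u hu => ?_
  have hu2 : 0 ≤ 1 - u ^ 2 := by
    rw [Set.uIcc_of_le (by norm_num)] at hu
    nlinarith [hu.1, hu.2]
  simp only [Real.rpow_add' hu2 (by linarith : α + 1 ≠ 0), Real.rpow_one]
  ring

lemma two_mul_add_one_mul_moment_succ (hα : 0 ≤ α) (ℓ : ℕ) :
    2 * (α + 1) * moment α κ (ℓ + 1)
      = ℓ * moment (α + 1) κ (ℓ - 1) + κ * moment (α + 1) κ ℓ := by
  have hα1 : 0 ≤ α + 1 := by linarith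
  have hderiv : ∀ u : ℝ,
      HasDerivAt (fun u => u ^ ℓ * (1 - u ^ 2) ^ (α + 1) * Real.exp (κ * u))
      (ℓ * (u ^ (ℓ - 1) * (1 - u ^ 2) ^ (α + 1) * Real.exp (κ * u))
        - 2 * (α + 1) * (u ^ (ℓ + 1) * (1 - u ^ 2) ^ α * Real.exp (κ * u))
        + κ * (u ^ ℓ * (1 - u ^ 2) ^ (α + 1) * Real.exp (κ * u))) u := by
    intro u
    have hbase := ((hasDerivAt_pow 2 u).const_sub 1).rpow_const (p := α + 1)
      (Or.inr (by linarith))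
    have hexp := ((hasDerivAt_id u).const_mul κ).exp
    refine (((hasDerivAt_pow ℓ u).mul hbase).mul hexp).congr_deriv ?_
    simp only [add_sub_cancel_right, id, Pi.mul_apply]
    ring
  have hlow := (intervalIntegrable_moment_integrand κ hα1 (ℓ - 1)).const_mul (ℓ : ℝ)
  have hmid := (intervalIntegrable_moment_integrand κ hα (ℓ + 1)).const_mul (2 * (α + 1))
  have hhigh := (intervalIntegrable_moment_integrand κ hα1 ℓ).const_mul κ
  have hint := integral_eq_sub_of_hasDerivAt (fun u _ => hderiv u) ((hlow.sub hmid).add hhigh)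
  rw [intervalIntegral.integral_add (hlow.sub hmid) hhigh,
    intervalIntegral.integral_sub hlow hmid, intervalIntegral.integral_const_mul,
    intervalIntegral.integral_const_mul, intervalIntegral.integral_const_mul] at hint
  norm_num [Real.zero_rpow (by linarith : α + 1 ≠ 0)] at hint
  simp only [moment]
  linarith

lemma moment_three_term (hα : 0 ≤ α) :
    (2 * α + 3) * (2 * α + 4) * (moment α κ 0 - moment (α + 1) κ 0)
      = (2 * α + 4) * moment α κ 0 + κ ^ 2 * moment (α + 2) κ 0 := by
  have h2 := two_mul_add_one_mul_moment_succ κ hα 1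
  have h1 := two_mul_add_one_mul_moment_succ κ (by linarith : 0 ≤ α + 1) 0
  have h0 := moment_add_one κ hα 0
  rw [show α + 1 + 1 = α + 2 by ring] at h1
  simp only [Nat.reduceAdd, Nat.reduceSub, Nat.cast_one, Nat.cast_zero, one_mul, zero_mul,
    zero_add] at h1 h2
  linear_combination (2 * α + 4) * h2 + κ * h1 - (2 * α + 4) * (2 * α + 2) * h0

end moment

lemma le_two_mul_of_forall_le_add_mul {d : ℕ → ℝ} {a q : ℝ} (hd : BddAbove (Set.range d))
    (hd0 : ∀ j, 0 ≤ d j) (hq0 : 0 ≤ q) (hq : q ≤ 1 / 4)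
    (h : ∀ j, d j ≤ a + q * (d j + d (j + 1))) (j : ℕ) : d j ≤ 2 * a := by
  have hle : ∀ j, d j ≤ ⨆ i, d i := le_ciSup hd
  have hsup : ⨆ i, d i ≤ a + 2 * q * ⨆ i, d i := ciSup_le fun i =>
    (h i).trans (by nlinarith [hle i, hle (i + 1)])
  nlinarith [hle j, (hd0 0).trans (hle 0)]

lemma abs_sub_le_of_ratio_recurrence {P A κ x y z : ℝ} (hP : 0 < P) (hPA : P ≤ A)
    (hκ : 4 * κ ^ 2 ≤ P ^ 2) (hy : |y| ≤ 1) (hz : |z| ≤ 1)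
    (hxy : A * (A + 1) * (1 - x) = (A + 1) + κ ^ 2 * (x * y))
    (hyz : (A + 2) * (A + 2 + 1) * (1 - y) = (A + 2 + 1) + κ ^ 2 * (y * z)) :
    |x - y| ≤ 2 / P + κ ^ 2 / P ^ 2 * (|x - y| + |y - z|) := by
  have hA : 0 < A := hP.trans_le hPA
  have hx_eq : 1 - x = (A + 1 + κ ^ 2 * (x * y)) / (A * (A + 1)) := by
    rw [eq_div_iff (by positivity)]; linarith
  have hy_eq : 1 - y = (A + 3 + κ ^ 2 * (y * z)) / ((A + 2) * (A + 3)) := by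
    rw [eq_div_iff (by positivity)]; linarith
  have hsplit : y - x = (1 / A - 1 / (A + 2)) + κ ^ 2 * y * (x - z) / (A * (A + 1))
      + κ ^ 2 * (y * z) * (1 / (A * (A + 1)) - 1 / ((A + 2) * (A + 3))) := by
    rw [show y - x = (1 - x) - (1 - y) by ring, hx_eq, hy_eq]
    field_simp
    ring
  have hshift : |1 / A - 1 / (A + 2)| ≤ 1 / P := by
    rw [abs_of_nonneg (sub_nonneg.2 (one_div_le_one_div_of_le hA (by linarith)))]
    exact (sub_le_self _ (by positivity)).trans (one_div_le_one_div_of_le hP hPA)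
  have hAA : 0 < A * (A + 1) := by positivity
  have hκA : 4 * κ ^ 2 ≤ A ^ 2 := hκ.trans (pow_le_pow_left₀ hP.le hPA 2)
  have hcross :
      |κ ^ 2 * y * (x - z) / (A * (A + 1))| ≤ κ ^ 2 / P ^ 2 * (|x - y| + |y - z|) := by
    rw [abs_div, abs_mul, abs_mul, abs_of_nonneg (sq_nonneg κ), abs_of_pos hAA, mul_assoc,
      div_mul_eq_mul_div]
    refine div_le_div₀ (by positivity) (mul_le_mul_of_nonneg_left ?_ (sq_nonneg κ))
      (by positivity) (by nlinarith)
    simpa using mul_le_mul hy (abs_sub_le x y z) (abs_nonneg _) zero_le_one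
  have hweights : |κ ^ 2 * (y * z) * (1 / (A * (A + 1)) - 1 / ((A + 2) * (A + 3)))| ≤ 1 / P := by
    have hg : 1 / (A * (A + 1)) - 1 / ((A + 2) * (A + 3))
        = (4 * A + 6) / (A * (A + 1) * (A + 2) * (A + 3)) := by
      field_simp
      ring
    have hg0 : 0 ≤ (4 * A + 6) / (A * (A + 1) * (A + 2) * (A + 3)) := by positivity
    have hyz1 : |y * z| ≤ 1 := by
      simpa [abs_mul] using mul_le_mul hy hz (abs_nonneg _) zero_le_one
    rw [hg, abs_mul, abs_mul, abs_of_nonneg (sq_nonneg κ), abs_of_nonneg hg0]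
    calc κ ^ 2 * |y * z| * ((4 * A + 6) / (A * (A + 1) * (A + 2) * (A + 3)))
        ≤ κ ^ 2 * ((4 * A + 6) / (A * (A + 1) * (A + 2) * (A + 3))) := by
          nlinarith [mul_nonneg (sq_nonneg κ) hg0]
      _ ≤ 1 / A := by
          rw [mul_div_assoc', div_le_div_iff₀ (by positivity) hA]
          nlinarith [mul_le_mul_of_nonneg_right hκA (by positivity : 0 ≤ (4 * A + 6) * A)]
      _ ≤ 1 / P := one_div_le_one_div_of_le hP hPA
  calc |x - y| = |(1 / A - 1 / (A + 2)) + κ ^ 2 * y * (x - z) / (A * (A + 1))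
      + κ ^ 2 * (y * z) * (1 / (A * (A + 1)) - 1 / ((A + 2) * (A + 3)))| := by
        rw [abs_sub_comm, hsplit]
    _ ≤ _ := abs_add_three _ _ _
    _ ≤ 1 / P + κ ^ 2 / P ^ 2 * (|x - y| + |y - z|) + 1 / P := by gcongr
    _ = _ := by ring

lemma abs_le_one_of_ratio_recurrence {A κ x y : ℝ} (hA : 0 < A) (hx : 0 < x) (hy : 0 < y)
    (h : A * (A + 1) * (1 - x) = (A + 1) + κ ^ 2 * (x * y)) : |x| ≤ 1 := by
  rw [abs_of_pos hx]
  nlinarith [mul_pos (mul_pos hA (by linarith : 0 < A + 1)) hx,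
    mul_nonneg (sq_nonneg κ) (mul_pos hx hy).le]

lemma abs_sub_succ_le_of_ratio_recurrence {P κ : ℝ} {r : ℕ → ℝ} (hP : 0 < P)
    (hκ : 4 * κ ^ 2 ≤ P ^ 2) (hr : ∀ j, 0 < r j)
    (hrec : ∀ j : ℕ, (P + 2 * j) * (P + 2 * j + 1) * (1 - r j)
      = (P + 2 * j + 1) + κ ^ 2 * (r j * r (j + 1))) :
    |r 0 - r 1| ≤ 4 / P := by
  have hr1 : ∀ j, |r j| ≤ 1 := fun j =>
    abs_le_one_of_ratio_recurrence (by positivity) (hr j) (hr (j + 1)) (hrec j)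
  have hstep : ∀ j : ℕ, |r j - r (j + 1)|
      ≤ 2 / P + κ ^ 2 / P ^ 2 * (|r j - r (j + 1)| + |r (j + 1) - r (j + 1 + 1)|) := fun j => by
    have hnext := hrec (j + 1)
    push_cast at hnext
    exact abs_sub_le_of_ratio_recurrence hP (le_add_of_nonneg_right (by positivity)) hκ
      (hr1 _) (hr1 _) (hrec j) (by linear_combination hnext)
  have hbdd : BddAbove (Set.range fun j => |r j - r (j + 1)|) :=
    ⟨2, by rintro _ ⟨j, rfl⟩; linarith [abs_sub (r j) (r (j + 1)), hr1 j, hr1 (j + 1)]⟩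
  have hq : κ ^ 2 / P ^ 2 ≤ 1 / 4 := by
    rw [div_le_iff₀ (by positivity)]; linarith
  calc |r 0 - r 1| ≤ 2 * (2 / P) :=
        le_two_mul_of_forall_le_add_mul hbdd (fun _ => abs_nonneg _) (by positivity) hq hstep 0
    _ = 4 / P := by ring

lemma abs_ratio_expansion_le {P x y : ℝ} (hP : 2 ≤ P) (hx : |x| ≤ 1)
    (hxy : |x - y| ≤ 4 / P) :
    |x * y / (P + 1) - P * x ^ 2 / (P - 1) ^ 2| ≤ 16 / P ^ 2 := by
  have hP1 : 0 < P - 1 := by linarith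
  have hP3 : 0 ≤ 3 * P - 1 := by linarith
  have hsplit : x * y / (P + 1) - P * x ^ 2 / (P - 1) ^ 2
      = x * (y - x) / (P + 1) - x ^ 2 * ((3 * P - 1) / ((P + 1) * (P - 1) ^ 2)) := by
    field_simp
    ring
  have h1 : |x * (y - x) / (P + 1)| ≤ 4 / P ^ 2 := by
    rw [abs_div, abs_mul, abs_sub_comm, abs_of_pos (by linarith : 0 < P + 1)]
    calc |x| * |x - y| / (P + 1) ≤ 1 * (4 / P) / P := by
          gcongr
          linarith
      _ = 4 / P ^ 2 := by ring
  have h2 : |x ^ 2 * ((3 * P - 1) / ((P + 1) * (P - 1) ^ 2))| ≤ 12 / P ^ 2 := by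
    have hx2 : x ^ 2 ≤ 1 := by nlinarith [abs_nonneg x, sq_abs x]
    rw [abs_of_nonneg (by positivity)]
    calc x ^ 2 * ((3 * P - 1) / ((P + 1) * (P - 1) ^ 2))
        ≤ 1 * ((3 * P - 1) / ((P + 1) * (P - 1) ^ 2)) := by
          gcongr
      _ ≤ 12 / P ^ 2 := by
          rw [one_mul, div_le_div_iff₀ (by positivity) (by positivity)]
          nlinarith [mul_le_mul_of_nonneg_left hP (by positivity : 0 ≤ P ^ 2 * P)]
  rw [hsplit]
  calc _ ≤ _ := abs_sub _ _
    _ ≤ 4 / P ^ 2 + 12 / P ^ 2 := add_le_add h1 h2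
    _ = 16 / P ^ 2 := by ring

lemma abs_sqrt_sub_one_le (x : ℝ) : |√x - 1| ≤ |x - 1| := by
  rcases le_or_gt 0 x with hx | hx
  · have hfac : x - 1 = (√x - 1) * (√x + 1) := by linear_combination -Real.sq_sqrt hx
    rw [hfac, abs_mul, abs_of_pos (by positivity : 0 < √x + 1)]
    nlinarith [abs_nonneg (√x - 1), Real.sqrt_nonneg x]
  · rw [Real.sqrt_eq_zero_of_nonpos hx.le, zero_sub, abs_neg, abs_one,
      abs_of_neg (by linarith)]
    linarith

noncomputable def momentRatio (α κ : ℝ) (j : ℕ) : ℝ :=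
  moment (α + j + 1) κ 0 / moment (α + j) κ 0

section momentRatio

variable {α : ℝ} (κ : ℝ)

lemma momentRatio_pos (hα : 0 ≤ α) (j : ℕ) : 0 < momentRatio α κ j :=
  div_pos (moment_zero_pos κ (by positivity)) (moment_zero_pos κ (by positivity))

lemma momentRatio_recurrence (hα : 0 ≤ α) (j : ℕ) :
    (2 * α + 3 + 2 * j) * (2 * α + 3 + 2 * j + 1) * (1 - momentRatio α κ j)
      = (2 * α + 3 + 2 * j + 1) + κ ^ 2 * (momentRatio α κ j * momentRatio α κ (j + 1)) := by
  have h := moment_three_term κ (α := α + j) (by positivity)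
  have h0 := moment_zero_pos κ (α := α + j) (by positivity)
  have h1 := moment_zero_pos κ (α := α + j + 1) (by positivity)
  simp only [momentRatio, Nat.cast_add, Nat.cast_one, ← add_assoc]
  rw [show α + j + 1 + 1 = α + j + 2 by ring]
  field_simp
  linear_combination h

lemma e1_eq_momentRatio {p : ℕ} (hp : 3 ≤ p) :
    e1 p κ = κ * momentRatio (((p : ℝ) - 3) / 2) κ 0 / (p - 1) := by
  have hp' : (3 : ℝ) ≤ p := by exact_mod_cast hp
  set α := ((p : ℝ) - 3) / 2 with hα_def
  have hα : 0 ≤ α := by linarith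
  have hp1 : (p : ℝ) - 1 = 2 * (α + 1) := by rw [hα_def]; ring
  have h := two_mul_add_one_mul_moment_succ κ hα 0
  have h0 := moment_zero_pos κ hα
  simp only [CharP.cast_eq_zero, zero_mul, zero_add] at h
  simp only [e1, momentRatio, Nat.cast_zero, add_zero, hp1]
  change moment α κ 1 / moment α κ 0 = _
  field_simp
  linear_combination h

lemma e2_eq_one_sub_momentRatio {p : ℕ} (hp : 3 ≤ p) :
    e2 p κ = 1 - momentRatio (((p : ℝ) - 3) / 2) κ 0 := by
  have hα : 0 ≤ ((p : ℝ) - 3) / 2 := by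
    have : (3 : ℝ) ≤ p := by exact_mod_cast hp
    linarith
  have h0 := moment_zero_pos κ hα
  simp only [e2, momentRatio, Nat.cast_zero, add_zero, moment_add_one κ hα 0]
  change moment _ κ 2 / moment _ κ 0 = _
  field_simp
  ring

end momentRatio

lemma abs_mul_etilde2_sub_one_le {p : ℕ} {κ : ℝ} (hp : 3 ≤ p)
    (hκ : 4 * κ ^ 2 ≤ (p : ℝ) ^ 2) :
    |p * etilde2 p κ - 1| ≤ 16 * κ ^ 2 / (p : ℝ) ^ 2 := by
  have hp' : (3 : ℝ) ≤ p := by exact_mod_cast hp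
  have hα : 0 ≤ ((p : ℝ) - 3) / 2 := by linarith
  have hP : 2 * (((p : ℝ) - 3) / 2) + 3 = p := by ring
  set r := momentRatio (((p : ℝ) - 3) / 2) κ
  have hr : ∀ j, 0 < r j := momentRatio_pos κ hα
  have hrec : ∀ j : ℕ, (p + 2 * j) * (p + 2 * j + 1) * (1 - r j)
      = (p + 2 * j + 1) + κ ^ 2 * (r j * r (j + 1)) := by
    simpa only [hP] using momentRatio_recurrence κ hα
  have hexp : p * etilde2 p κ - 1
      = κ ^ 2 * (r 0 * r 1 / (p + 1) - p * r 0 ^ 2 / (p - 1) ^ 2) := by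
    have hrec0 := hrec 0
    simp only [Nat.cast_zero, mul_zero, add_zero] at hrec0
    have : (p : ℝ) - 1 ≠ 0 := by linarith
    rw [etilde2, e1_eq_momentRatio κ hp, e2_eq_one_sub_momentRatio κ hp]
    field_simp
    linear_combination (p - 1) ^ 2 * hrec0
  calc |p * etilde2 p κ - 1|
      = κ ^ 2 * |r 0 * r 1 / (p + 1) - p * r 0 ^ 2 / (p - 1) ^ 2| := by
        rw [hexp, abs_mul, abs_of_nonneg (sq_nonneg κ)]
    _ ≤ κ ^ 2 * (16 / (p : ℝ) ^ 2) := by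
        gcongr
        exact abs_ratio_expansion_le (by linarith)
          (abs_le_one_of_ratio_recurrence (by positivity) (hr 0) (hr 1) (hrec 0))
          (abs_sub_succ_le_of_ratio_recurrence (by positivity) hκ hr hrec)
    _ = 16 * κ ^ 2 / (p : ℝ) ^ 2 := by ring

lemma abs_scaled_sqrt_mul_etilde2_sub_one_le {p : ℕ} {κ : ℝ} (hp : 3 ≤ p)
    (hκ : 4 * κ ^ 2 ≤ (p : ℝ) ^ 2) :
    |((p : ℝ) ^ 2 / κ ^ 2) * (Real.sqrt ((p : ℝ) * etilde2 p κ) - 1)| ≤ 16 := by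
  rcases eq_or_ne κ 0 with rfl | hκ0
  · simp -- `p ^ 2 / 0 = 0`
  have hp0 : (0 : ℝ) < p := by positivity
  rw [abs_mul, abs_of_nonneg (by positivity)]
  calc (p : ℝ) ^ 2 / κ ^ 2 * |√(p * etilde2 p κ) - 1|
      ≤ (p : ℝ) ^ 2 / κ ^ 2 * (16 * κ ^ 2 / (p : ℝ) ^ 2) := by
        gcongr
        exact (abs_sqrt_sub_one_le _).trans (abs_mul_etilde2_sub_one_le hp hκ)
    _ = 16 := by field_simp

theorem sqrt_p_etilde2_sub_one_bigO_general (p : ℕ → ℕ)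
    (hp : Tendsto (fun n => (p n : ℝ)) atTop atTop)
    (κ : ℕ → ℝ)
    (hκp : Tendsto (fun n => κ n / (p n : ℝ)) atTop (nhds 0)) :
    ∃ C : ℝ, ∀ n,
      |((p n : ℝ) ^ 2 / (κ n) ^ 2) *
          (Real.sqrt ((p n : ℝ) * etilde2 (p n) (κ n)) - 1)| ≤ C := by
  have hp3 : ∀ᶠ n in atTop, 3 ≤ p n := by
    filter_upwards [hp.eventually_ge_atTop 3] with n hn
    exact_mod_cast hn
  have hsmall : ∀ᶠ n in atTop, (κ n / p n) ^ 2 ≤ 1 / 4 :=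
    (by simpa using hκp.pow 2 : Tendsto (fun n => (κ n / p n) ^ 2) atTop (nhds 0)).eventually
      (eventually_le_nhds (by norm_num))
  have hbound : ∀ᶠ n in atTop, |((p n : ℝ) ^ 2 / (κ n) ^ 2) *
      (Real.sqrt ((p n : ℝ) * etilde2 (p n) (κ n)) - 1)| ≤ 16 := by
    filter_upwards [hp3, hsmall] with n hn3 hn
    refine abs_scaled_sqrt_mul_etilde2_sub_one_le hn3 ?_
    have : (0 : ℝ) < p n := by positivity
    rw [div_pow, div_le_iff₀ (by positivity)] at hn
    linarith
  obtain ⟨C, hC⟩ := (isBoundedUnder_of_eventually_le hbound).bddAbove_range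
  exact ⟨C, fun n => hC ⟨n, rfl⟩⟩

theorem sqrt_p_etilde2_sub_one_bigO (p : ℕ → ℕ) (hp2 : ∀ n, 2 ≤ p n)
    (hp : Tendsto (fun n => (p n : ℝ)) atTop atTop)
    (κ : ℕ → ℝ) (hκ : ∀ n, 0 < κ n)
    (hκp : Tendsto (fun n => κ n / (p n : ℝ)) atTop (nhds 0)) :
    ∃ C : ℝ, ∀ n,
      |((p n : ℝ) ^ 2 / (κ n) ^ 2) *
          (Real.sqrt ((p n : ℝ) * etilde2 (p n) (κ n)) - 1)| ≤ C :=
  sqrt_p_etilde2_sub_one_bigO_general p hp κ hκp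
end

section
/- Let p ≥ 3 be an integer, let θ be a unit vector in ℝ^p, and let μ be a probability measure on the unit sphere S^{p−1} ⊂ ℝ^p that is rotationally symmetric about θ. Then for every unit vector θ₀ ∈ ℝ^p, ∫_{S^{p−1}} (x'θ₀)² dμ(x) = e₂ (θ'θ₀)² + ((1 − e₂)/(p−1)) (1 − (θ'θ₀)²), where e₂ := ∫_{S^{p−1}} (x'θ)² dμ(x). -/
/-!
The quadratic form `Q u = ∫ (x ⬝ᵥ u) ^ 2 ∂μ` is invariant under the rotations fixing `θ`, and these
act transitively on the vectors `u` with prescribed `θ ⬝ᵥ u` and `u ⬝ᵥ u`: a Householder reflection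
in `a - b` maps `a` to `b` and fixes `θ`, and since `p ≥ 3` a second reflection in a vector
orthogonal to `θ` and `b` restores the determinant. For a unit `v ⊥ θ` this gives
`Q (cθ + sv) = Q (cθ - sv)`, so the parallelogram law yields
`Q u = (θ ⬝ᵥ u)² Q θ + (u ⬝ᵥ u - (θ ⬝ᵥ u)²) Q v`. Summing over the standard basis,
`∑ i, Q eᵢ = ∫ x ⬝ᵥ x ∂μ = 1` forces `Q v = (1 - Q θ) / (p - 1)`.
-/

open Matrix MeasureTheory

namespace Matrix

variable {n : Type*} [Fintype n]

theorem exists_ne_zero_forall_dotProduct_eq_zero {m : Type*} [Fintype m]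
    (hmn : Fintype.card m < Fintype.card n) (u : m → n → ℝ) :
    ∃ c ≠ 0, ∀ i, u i ⬝ᵥ c = 0 := by
  have hker : LinearMap.ker (of u).mulVecLin ≠ ⊥ :=
    LinearMap.ker_ne_bot_of_finrank_lt (by simpa using hmn)
  obtain ⟨c, hc, hc0⟩ := (Submodule.ne_bot_iff _).mp hker
  exact ⟨c, hc0, fun i => congrFun (hc : of u *ᵥ c = 0) i⟩

theorem sq_dotProduct_le_mul (x u : n → ℝ) : (x ⬝ᵥ u) ^ 2 ≤ (x ⬝ᵥ x) * (u ⬝ᵥ u) := by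
  simpa [dotProduct, sq] using Finset.sum_mul_sq_le_sq_mul_sq Finset.univ x u

theorem exists_dotProduct_self_eq_one_and_dotProduct_eq_zero (hn : 2 ≤ Fintype.card n)
    (θ : n → ℝ) : ∃ v : n → ℝ, v ⬝ᵥ v = 1 ∧ θ ⬝ᵥ v = 0 := by
  obtain ⟨c, hc0, hc⟩ := exists_ne_zero_forall_dotProduct_eq_zero (m := Unit)
    (by rwa [Fintype.card_unit]) fun _ => θ
  have hcc : 0 < c ⬝ᵥ c :=
    (Finset.sum_nonneg fun i _ => mul_self_nonneg (c i)).lt_of_ne'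
      (dotProduct_self_eq_zero.not.mpr hc0)
  refine ⟨(√(c ⬝ᵥ c))⁻¹ • c, ?_, by rw [dotProduct_smul, hc (), smul_zero]⟩
  rw [dotProduct_smul, smul_dotProduct, smul_eq_mul, smul_eq_mul, ← mul_assoc, ← sq, inv_pow,
    Real.sq_sqrt hcc.le, inv_mul_cancel₀ hcc.ne']

variable [DecidableEq n]

-- For `a = 0` this is the identity, as `2 / 0 = 0`.
noncomputable def householder (a : n → ℝ) : Matrix n n ℝ :=
  1 - (2 / (a ⬝ᵥ a)) • vecMulVec a a

theorem householder_mulVec (a x : n → ℝ) :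
    householder a *ᵥ x = x - (2 * (a ⬝ᵥ x) / (a ⬝ᵥ a)) • a := by
  rw [householder, sub_mulVec, one_mulVec, smul_mulVec, vecMulVec_mulVec, op_smul_eq_smul,
    smul_smul, div_mul_eq_mul_div]

theorem householder_mulVec_of_dotProduct_eq_zero {a x : n → ℝ} (h : a ⬝ᵥ x = 0) :
    householder a *ᵥ x = x := by
  simp [householder_mulVec, h]

theorem householder_sub_mulVec {a b : n → ℝ} (h : a ⬝ᵥ a = b ⬝ᵥ b) :
    householder (a - b) *ᵥ a = b := by
  rcases eq_or_ne a b with rfl | hab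
  · simp [householder]
  have hpos : (a - b) ⬝ᵥ (a - b) ≠ 0 := by
    rwa [Ne, dotProduct_self_eq_zero, sub_eq_zero]
  have hhalf : 2 * ((a - b) ⬝ᵥ a) = (a - b) ⬝ᵥ (a - b) := by
    simp only [sub_dotProduct, dotProduct_sub, h, dotProduct_comm b a]
    ring
  rw [householder_mulVec, hhalf, div_self hpos, one_smul, sub_sub_cancel]

theorem transpose_householder (a : n → ℝ) : (householder a)ᵀ = householder a := by
  simp [householder, transpose_vecMulVec]

theorem householder_mem_orthogonalGroup (a : n → ℝ) :
    householder a ∈ orthogonalGroup n ℝ := by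
  rw [mem_orthogonalGroup_iff, transpose_householder]
  have hc : (2 / (a ⬝ᵥ a)) * (2 / (a ⬝ᵥ a)) * (a ⬝ᵥ a) = 2 * (2 / (a ⬝ᵥ a)) := by
    rcases eq_or_ne (a ⬝ᵥ a) 0 with h | h
    · simp [h]
    · field_simp
  simp only [householder, sub_mul, mul_sub, one_mul, mul_one, smul_mul_smul_comm,
    vecMulVec_mul_vecMulVec, vecMulVec_smul, smul_smul, hc]
  module

theorem det_householder {a : n → ℝ} (ha : a ≠ 0) : (householder a).det = -1 := by
  have h : a ⬝ᵥ a ≠ 0 := by rwa [Ne, dotProduct_self_eq_zero]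
  rw [householder, sub_eq_add_neg, ← neg_smul, ← smul_vecMulVec, vecMulVec_eq Unit,
    det_one_add_replicateCol_mul_replicateRow, dotProduct_smul, smul_eq_mul]
  field_simp
  ring

theorem dotProduct_mulVec_mulVec_of_mem_orthogonalGroup {O : Matrix n n ℝ}
    (hO : O ∈ orthogonalGroup n ℝ) (x y : n → ℝ) : (O *ᵥ x) ⬝ᵥ (O *ᵥ y) = x ⬝ᵥ y := by
  rw [dotProduct_mulVec, ← mulVec_transpose, mulVec_mulVec, (mem_orthogonalGroup_iff' n ℝ).mp hO,
    one_mulVec]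

theorem exists_mem_specialOrthogonalGroup_mulVec_eq (hn : 3 ≤ Fintype.card n)
    {θ a b : n → ℝ} (hθ : θ ⬝ᵥ a = θ ⬝ᵥ b) (hab : a ⬝ᵥ a = b ⬝ᵥ b) :
    ∃ O ∈ specialOrthogonalGroup n ℝ, O *ᵥ θ = θ ∧ O *ᵥ a = b := by
  rcases eq_or_ne a b with rfl | hne
  · exact ⟨1, one_mem _, one_mulVec θ, one_mulVec a⟩
  obtain ⟨c, hc0, hc⟩ := exists_ne_zero_forall_dotProduct_eq_zero (m := Fin 2)
    (by rwa [Fintype.card_fin]) ![θ, b]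
  have hcθ : c ⬝ᵥ θ = 0 := by simpa [dotProduct_comm] using hc 0
  have hcb : c ⬝ᵥ b = 0 := by simpa [dotProduct_comm] using hc 1
  have habθ : (a - b) ⬝ᵥ θ = 0 := by
    rw [sub_dotProduct, dotProduct_comm a, hθ, dotProduct_comm, sub_self]
  refine ⟨householder c * householder (a - b), ?_, ?_, ?_⟩
  · rw [mem_specialOrthogonalGroup_iff, det_mul, det_householder hc0,
      det_householder (sub_ne_zero.mpr hne)]
    exact ⟨mul_mem (householder_mem_orthogonalGroup c) (householder_mem_orthogonalGroup _),
      by norm_num⟩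
  · rw [← mulVec_mulVec, householder_mulVec_of_dotProduct_eq_zero habθ,
      householder_mulVec_of_dotProduct_eq_zero hcθ]
  · rw [← mulVec_mulVec, householder_sub_mulVec hab,
      householder_mulVec_of_dotProduct_eq_zero hcb]

end Matrix

section SecondMoment

variable {n : Type*} [Fintype n] {μ : Measure (n → ℝ)}

noncomputable def secondMoment (μ : Measure (n → ℝ)) (u : n → ℝ) : ℝ :=
  ∫ x, (x ⬝ᵥ u) ^ 2 ∂μ

theorem integrable_sq_dotProduct [IsFiniteMeasure μ] (hμ : ∀ᵐ x ∂μ, x ⬝ᵥ x = 1) (u : n → ℝ) :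
    Integrable (fun x => (x ⬝ᵥ u) ^ 2) μ := by
  refine .of_bound (by fun_prop : Continuous fun x : n → ℝ => (x ⬝ᵥ u) ^ 2).aestronglyMeasurable
    (u ⬝ᵥ u) ?_
  filter_upwards [hμ] with x hx
  rw [Real.norm_of_nonneg (sq_nonneg _)]
  simpa [hx] using sq_dotProduct_le_mul x u

theorem secondMoment_smul (c : ℝ) (u : n → ℝ) :
    secondMoment μ (c • u) = c ^ 2 * secondMoment μ u := by
  simp only [secondMoment, dotProduct_smul, smul_eq_mul, mul_pow, integral_const_mul]

theorem secondMoment_add_add_secondMoment_sub [IsFiniteMeasure μ]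
    (hμ : ∀ᵐ x ∂μ, x ⬝ᵥ x = 1) (a b : n → ℝ) :
    secondMoment μ (a + b) + secondMoment μ (a - b) =
      2 * secondMoment μ a + 2 * secondMoment μ b := by
  simp only [secondMoment]
  rw [← integral_add (integrable_sq_dotProduct hμ _) (integrable_sq_dotProduct hμ _),
    ← integral_const_mul, ← integral_const_mul,
    ← integral_add ((integrable_sq_dotProduct hμ _).const_mul _)
      ((integrable_sq_dotProduct hμ _).const_mul _)]
  congr 1 with x
  simp only [dotProduct_add, dotProduct_sub]
  ring

variable [DecidableEq n]

def IsRotationallySymmetricAbout (μ : Measure (n → ℝ)) (θ : n → ℝ) : Prop :=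
  ∀ O : Matrix n n ℝ, O ∈ orthogonalGroup n ℝ → O.det = 1 → O *ᵥ θ = θ →
    μ.map (fun x => O *ᵥ x) = μ

theorem secondMoment_eq_of_dotProduct_eq {θ a b : n → ℝ} (hn : 3 ≤ Fintype.card n)
    (hrot : IsRotationallySymmetricAbout μ θ) (hθ : θ ⬝ᵥ a = θ ⬝ᵥ b)
    (hab : a ⬝ᵥ a = b ⬝ᵥ b) : secondMoment μ a = secondMoment μ b := by
  obtain ⟨O, hO, hOθ, hOa⟩ := exists_mem_specialOrthogonalGroup_mulVec_eq hn hθ hab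
  rw [mem_specialOrthogonalGroup_iff] at hO
  have hOcont : Continuous fun x : n → ℝ => O *ᵥ x := by fun_prop
  calc secondMoment μ a = ∫ x, ((O *ᵥ x) ⬝ᵥ (O *ᵥ a)) ^ 2 ∂μ := by
        simp only [dotProduct_mulVec_mulVec_of_mem_orthogonalGroup hO.1, secondMoment]
    _ = ∫ x, (x ⬝ᵥ O *ᵥ a) ^ 2 ∂(μ.map fun x => O *ᵥ x) :=
        (integral_map hOcont.aemeasurable
          (by fun_prop : Continuous fun x => (x ⬝ᵥ O *ᵥ a) ^ 2).aestronglyMeasurable).symm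
    _ = secondMoment μ b := by rw [hrot O hO.1 hO.2 hOθ, hOa, secondMoment]

theorem secondMoment_smul_add_smul [IsFiniteMeasure μ] {θ v : n → ℝ} (hn : 3 ≤ Fintype.card n)
    (hrot : IsRotationallySymmetricAbout μ θ) (hμ : ∀ᵐ x ∂μ, x ⬝ᵥ x = 1) (hθv : θ ⬝ᵥ v = 0)
    (c s : ℝ) :
    secondMoment μ (c • θ + s • v) = c ^ 2 * secondMoment μ θ + s ^ 2 * secondMoment μ v := by
  have hvθ : v ⬝ᵥ θ = 0 := by rw [dotProduct_comm, hθv]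
  have hreflect : secondMoment μ (c • θ + s • v) = secondMoment μ (c • θ - s • v) := by
    refine secondMoment_eq_of_dotProduct_eq hn hrot ?_ ?_ <;>
      simp only [dotProduct_add, dotProduct_sub, add_dotProduct, sub_dotProduct,
        dotProduct_smul, smul_dotProduct, smul_eq_mul, hθv, hvθ] <;> ring
  have hpar := secondMoment_add_add_secondMoment_sub hμ (c • θ) (s • v)
  rw [← hreflect, secondMoment_smul, secondMoment_smul] at hpar
  linarith

theorem secondMoment_eq_sq_mul_secondMoment_add [IsFiniteMeasure μ] {θ v : n → ℝ}
    (hn : 3 ≤ Fintype.card n) (hrot : IsRotationallySymmetricAbout μ θ)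
    (hμ : ∀ᵐ x ∂μ, x ⬝ᵥ x = 1) (hθ : θ ⬝ᵥ θ = 1) (hv : v ⬝ᵥ v = 1) (hθv : θ ⬝ᵥ v = 0) (u : n → ℝ) :
    secondMoment μ u =
      (θ ⬝ᵥ u) ^ 2 * secondMoment μ θ + (u ⬝ᵥ u - (θ ⬝ᵥ u) ^ 2) * secondMoment μ v := by
  set c := θ ⬝ᵥ u
  have hc : c ^ 2 ≤ u ⬝ᵥ u := by simpa [hθ] using sq_dotProduct_le_mul θ u
  have hs := Real.sq_sqrt (sub_nonneg.mpr hc)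
  set s := √(u ⬝ᵥ u - c ^ 2)
  have hvθ : v ⬝ᵥ θ = 0 := by rw [dotProduct_comm, hθv]
  rw [← hs, ← secondMoment_smul_add_smul hn hrot hμ hθv]
  refine secondMoment_eq_of_dotProduct_eq hn hrot ?_ ?_ <;>
    simp only [dotProduct_add, add_dotProduct, dotProduct_smul, smul_dotProduct, smul_eq_mul,
      hθ, hv, hθv, hvθ]
  · ring
  · linear_combination -hs

theorem sum_secondMoment_single [IsProbabilityMeasure μ] (hμ : ∀ᵐ x ∂μ, x ⬝ᵥ x = 1) :
    ∑ i, secondMoment μ (Pi.single i 1) = 1 := by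
  simp only [secondMoment]
  rw [← integral_finsetSum _ fun i _ => integrable_sq_dotProduct hμ _,
    integral_congr_ae (g := fun _ => 1) (hμ.mono fun x hx => by
      simp only [dotProduct_single_one]
      simpa [dotProduct, sq] using hx)]
  simp

theorem secondMoment_add_mul_secondMoment_eq_one [IsProbabilityMeasure μ] {θ v : n → ℝ}
    (hn : 3 ≤ Fintype.card n) (hrot : IsRotationallySymmetricAbout μ θ)
    (hμ : ∀ᵐ x ∂μ, x ⬝ᵥ x = 1) (hθ : θ ⬝ᵥ θ = 1) (hv : v ⬝ᵥ v = 1) (hθv : θ ⬝ᵥ v = 0) :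
    secondMoment μ θ + (Fintype.card n - 1) * secondMoment μ v = 1 := by
  have h := sum_secondMoment_single hμ
  have hθθ : ∑ i, θ i ^ 2 = 1 := by simpa [dotProduct, sq] using hθ
  rw [Finset.sum_congr rfl fun i _ =>
    secondMoment_eq_sq_mul_secondMoment_add hn hrot hμ hθ hv hθv (Pi.single i 1)] at h
  simp only [dotProduct_single_one, Pi.single_eq_same] at h
  rw [Finset.sum_add_distrib, ← Finset.sum_mul, ← Finset.sum_mul, Finset.sum_sub_distrib,
    hθθ] at h
  simpa using h

end SecondMoment

theorem second_moment_rotationally_symmetric (p : ℕ) (hp : 3 ≤ p)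
    (θ : Fin p → ℝ) (hθ : θ ⬝ᵥ θ = 1)
    (μ : Measure (Fin p → ℝ)) [IsProbabilityMeasure μ]
    (hsphere : ∀ᵐ x ∂μ, x ⬝ᵥ x = 1)
    (hrot : ∀ O : Matrix (Fin p) (Fin p) ℝ,
      O ∈ Matrix.orthogonalGroup (Fin p) ℝ → O.det = 1 → O.mulVec θ = θ →
        Measure.map (fun x => O.mulVec x) μ = μ)
    (θ₀ : Fin p → ℝ) (hθ₀ : θ₀ ⬝ᵥ θ₀ = 1) :
    ∫ x, (x ⬝ᵥ θ₀) ^ 2 ∂μ =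
      (∫ x, (x ⬝ᵥ θ) ^ 2 ∂μ) * (θ ⬝ᵥ θ₀) ^ 2 +
        ((1 - ∫ x, (x ⬝ᵥ θ) ^ 2 ∂μ) / ((p : ℝ) - 1)) * (1 - (θ ⬝ᵥ θ₀) ^ 2) := by
  have hn : 3 ≤ Fintype.card (Fin p) := by rwa [Fintype.card_fin]
  have hp1 : (p : ℝ) - 1 ≠ 0 := by
    have : (3 : ℝ) ≤ p := by exact_mod_cast hp
    linarith
  obtain ⟨v, hv, hθv⟩ := exists_dotProduct_self_eq_one_and_dotProduct_eq_zero (by omega) θ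
  have htrace := secondMoment_add_mul_secondMoment_eq_one hn hrot hsphere hθ hv hθv
  rw [Fintype.card_fin] at htrace
  have hq : secondMoment μ v = (1 - secondMoment μ θ) / ((p : ℝ) - 1) := by
    field_simp
    linarith
  change secondMoment μ θ₀ = secondMoment μ θ * _ + (1 - secondMoment μ θ) / _ * _
  rw [secondMoment_eq_sq_mul_secondMoment_add hn hrot hsphere hθ hv hθv θ₀, hθ₀, hq]
  ring
end
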